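/- arXiv:2501.11455 — 10 statements merged into one kernel-verified Lean document; each statement's English description precedes it below -/
import Mathlib

section
/- Let c be a real number and let k1, k2, k3 be integers with (k1-k2)(k3-k2) ≠ 0, |k3| > 16·max(|k1|, |k2|) and |k3| > 16·max(1, |c|). Then |Φ_c(k1,k2,k3)| ≥ (1/2)·|k1-k2|·|k3|^3, where Φ_c(k1,k2,k3) = φ_c(k1-k2+k3) - φ_c(k1) + φ_c(k2) - φ_c(k3) and φ_c(k) = k^4 + c·k^2. -/
noncomputable def phi (c k : ℝ) : ℝ := k ^ 4 + c * k ^ 2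

noncomputable def Phi3 (c k1 k2 k3 : ℝ) : ℝ :=
  phi c (k1 - k2 + k3) - phi c k1 + phi c k2 - phi c k3

theorem stmt_2 (c : ℝ) (k1 k2 k3 : ℤ)
    (hNR : (k1 - k2) * (k3 - k2) ≠ 0)
    (hmax : |k3| > 16 * max |k1| |k2|)
    (hc : (|k3| : ℝ) > 16 * max 1 |c|) :
    |Phi3 c (k1 : ℝ) (k2 : ℝ) (k3 : ℝ)| ≥
      (1 / 2) * |(k1 : ℝ) - (k2 : ℝ)| * |(k3 : ℝ)| ^ 3 := by
  set a : ℝ := (k1 : ℝ) - (k2 : ℝ) with ha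
  set b : ℝ := (k3 : ℝ) - (k2 : ℝ) with hb
  set E : ℝ := a ^ 2 + b ^ 2 + 3 * ((k1 : ℝ) + (k3 : ℝ)) ^ 2 + 2 * c with hE
  have hfac : Phi3 c (k1 : ℝ) (k2 : ℝ) (k3 : ℝ) = a * b * E := by
    simp only [Phi3, phi, hE, ha, hb]; ring
  have hk2 : 16 * |(k2 : ℝ)| < |(k3 : ℝ)| := by
    have h : (16 : ℤ) * |k2| < |k3| := lt_of_le_of_lt
      (by have := le_max_right |k1| |k2|; linarith) hmax
    exact_mod_cast (by push_cast [← Int.cast_abs]; exact_mod_cast h : (16:ℝ) * |(k2:ℝ)| < |(k3:ℝ)|)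
  have hcc : 16 * |c| < |(k3 : ℝ)| := lt_of_le_of_lt (by nlinarith [le_max_right 1 |c|]) hc
  have hK16 : (16 : ℝ) < |(k3 : ℝ)| := lt_of_le_of_lt (by nlinarith [le_max_left 1 |c|]) hc
  have habs3 : |(k3 : ℝ)| = |b + (k2 : ℝ)| := by rw [hb]; ring_nf
  have hbabs : (15 / 16) * |(k3 : ℝ)| ≤ |b| := by
    have h1 : |(k3 : ℝ)| ≤ |b| + |(k2 : ℝ)| := habs3 ▸ abs_add_le b (k2 : ℝ)
    linarith
  have hbb : |b| ^ 2 = b ^ 2 := sq_abs b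
  have hcabs : -|c| ≤ c := neg_abs_le c
  have hEge : (8 / 15) * |(k3 : ℝ)| ^ 2 < E := by
    have h1 : b ^ 2 ≥ ((15/16) * |(k3:ℝ)|) ^ 2 := by
      rw [← hbb]; exact pow_le_pow_left₀ (by positivity) hbabs 2
    nlinarith [sq_nonneg a, sq_nonneg ((k1:ℝ) + (k3:ℝ)), abs_nonneg (k3:ℝ)]
  have hEpos : 0 < E := lt_trans (by positivity) hEge
  have habsPhi : |Phi3 c (k1 : ℝ) (k2 : ℝ) (k3 : ℝ)| = |a| * |b| * E := by
    rw [hfac, abs_mul, abs_mul, abs_of_pos hEpos]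
  rw [habsPhi]
  have h2 : (1/2) * |(k3:ℝ)| ^ 3 ≤ |b| * E := by
    have := mul_le_mul hbabs (le_of_lt hEge) (by positivity) (abs_nonneg b)
    nlinarith [abs_nonneg (k3:ℝ)]
  have ha0 : 0 ≤ |a| := abs_nonneg a
  nlinarith [mul_le_mul_of_nonneg_left h2 ha0]
end

section
/- Let c be a real number and let k1, k2, k3 be integers with (k1-k2)(k3-k2) ≠ 0, |k2| > 16·max(|k1|, |k3|) and |k2| > 16·max(1, |c|). Then |Φ_c(k1,k2,k3)| ≥ |k2|^4, where Φ_c(k1,k2,k3) = φ_c(k1-k2+k3) - φ_c(k1) + φ_c(k2) - φ_c(k3) and φ_c(k) = k^4 + c·k^2. -/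
theorem stmt_3 (c : ℝ) (k1 k2 k3 : ℤ)
    (hNR : (k1 - k2) * (k3 - k2) ≠ 0)
    (hmax : |k2| > 16 * max |k1| |k3|)
    (hc : (|k2| : ℝ) > 16 * max 1 |c|) :
    |Phi3 c (k1 : ℝ) (k2 : ℝ) (k3 : ℝ)| ≥ |(k2 : ℝ)| ^ 4 := by
  set a : ℝ := (k1 : ℝ) - (k2 : ℝ) with ha
  set b : ℝ := (k3 : ℝ) - (k2 : ℝ) with hb
  have key : Phi3 c (k1 : ℝ) (k2 : ℝ) (k3 : ℝ)
      = a * b * (a ^ 2 + b ^ 2 + 3 * ((k1:ℝ) + (k3:ℝ)) ^ 2 + 2 * c) := by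
    simp only [Phi3, phi, ha, hb]; ring
  set K : ℝ := |(k2 : ℝ)| with hK
  clear_value a b K
  have hK16 : K > 16 := by
    have h1 : (16 : ℝ) * 1 ≤ 16 * max 1 |c| := by
      have := le_max_left (1:ℝ) |c|
      nlinarith
    linarith
  have hk1 : |(k1 : ℝ)| ≤ K / 16 := by
    have h1 : ((|k1| : ℤ) : ℝ) ≤ ((max |k1| |k3| : ℤ) : ℝ) := by
      exact_mod_cast le_max_left |k1| |k3|
    have h2 : ((|k2| : ℤ) : ℝ) > 16 * ((max |k1| |k3| : ℤ) : ℝ) := by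
      exact_mod_cast hmax
    push_cast at h1 h2
    rw [hK]; linarith
  have hk3 : |(k3 : ℝ)| ≤ K / 16 := by
    have h1 : ((|k3| : ℤ) : ℝ) ≤ ((max |k1| |k3| : ℤ) : ℝ) := by
      exact_mod_cast le_max_right |k1| |k3|
    have h2 : ((|k2| : ℤ) : ℝ) > 16 * ((max |k1| |k3| : ℤ) : ℝ) := by
      exact_mod_cast hmax
    push_cast at h1 h2
    rw [hK]; linarith
  have hcK : |c| ≤ K / 16 := by
    have := le_max_right (1:ℝ) |c|
    nlinarith
  have hA : |a| ≥ (15/16) * K := by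
    have h1 : |(k2:ℝ)| - |(k1:ℝ)| ≤ |(k2:ℝ) - (k1:ℝ)| := abs_sub_abs_le_abs_sub _ _
    have h2 : |(k2:ℝ) - (k1:ℝ)| = |a| := by rw [ha, abs_sub_comm]
    rw [h2] at h1
    linarith
  have hB : |b| ≥ (15/16) * K := by
    have h1 : |(k2:ℝ)| - |(k3:ℝ)| ≤ |(k2:ℝ) - (k3:ℝ)| := abs_sub_abs_le_abs_sub _ _
    have h2 : |(k2:ℝ) - (k3:ℝ)| = |b| := by rw [hb, abs_sub_comm]
    rw [h2] at h1
    linarith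
  have hKpos : (0:ℝ) < K := by linarith
  have ha2 : a ^ 2 ≥ (225/256) * K ^ 2 := by
    have h := mul_le_mul hA hA (by positivity) (abs_nonneg a)
    have h2 : |a| * |a| = a ^ 2 := by rw [abs_mul_abs_self]; ring
    have h3 : (15/16) * K * ((15/16) * K) = (225/256) * K ^ 2 := by ring
    linarith
  have hb2 : b ^ 2 ≥ (225/256) * K ^ 2 := by
    have h := mul_le_mul hB hB (by positivity) (abs_nonneg b)
    have h2 : |b| * |b| = b ^ 2 := by rw [abs_mul_abs_self]; ring
    have h3 : (15/16) * K * ((15/16) * K) = (225/256) * K ^ 2 := by ring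
    linarith
  have hcK2 : |c| ≤ K ^ 2 / 16 := by nlinarith
  have hcl : -(K^2/16) ≤ c := by
    have := neg_abs_le c; linarith
  have hbr : a ^ 2 + b ^ 2 + 3 * ((k1:ℝ) + (k3:ℝ)) ^ 2 + 2 * c ≥ (418/256) * K ^ 2 := by
    nlinarith [sq_nonneg ((k1:ℝ) + (k3:ℝ))]
  have hK2pos : (0:ℝ) < K ^ 2 := by positivity
  have hbrpos : (0:ℝ) < a ^ 2 + b ^ 2 + 3 * ((k1:ℝ) + (k3:ℝ)) ^ 2 + 2 * c := by
    linarith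
  rw [key, abs_mul, abs_mul, abs_of_pos hbrpos]
  have hab : |a| * |b| ≥ (225/256) * K ^ 2 := by
    have h := mul_le_mul hA hB (by positivity) (abs_nonneg a)
    have h3 : (15/16) * K * ((15/16) * K) = (225/256) * K ^ 2 := by ring
    linarith
  have habnn : (0:ℝ) ≤ |a| * |b| := by positivity
  have hfin : |a| * |b| * (a ^ 2 + b ^ 2 + 3 * ((k1:ℝ) + (k3:ℝ)) ^ 2 + 2 * c)
      ≥ ((225/256) * K ^ 2) * ((418/256) * K ^ 2) := by
    exact mul_le_mul hab hbr (by nlinarith) habnn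
  have heq : ((225/256) * K ^ 2) * ((418/256) * K ^ 2) = (94050/65536) * K ^ 4 := by ring
  have hK4nn : (0:ℝ) ≤ K ^ 4 := by positivity
  linarith
end

section
/- There exists a constant C > 0 with the following property. Let c be a real number and let k1, k2, k3 be integers with (k1-k2)(k3-k2) ≠ 0, 32·|k1| < min(|k2|, |k3|), |k2|/16 ≤ |k3| ≤ 16·|k2|, and max(|k1|,|k2|,|k3|) > 16·max(1, |c|). Then |Φ_c(k1,k2,k3)| ≥ C·|k3-k2|·max(|k1|,|k2|,|k3|)^3, where Φ_c(k1,k2,k3) = φ_c(k1-k2+k3) - φ_c(k1) + φ_c(k2) - φ_c(k3) and φ_c(k) = k^4 + c·k^2. -/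
set_option maxHeartbeats 1000000 in
theorem stmt_4 :
    ∃ C : ℝ, 0 < C ∧ ∀ (c : ℝ) (k1 k2 k3 : ℤ),
      (k1 - k2) * (k3 - k2) ≠ 0 →
      32 * |k1| < min |k2| |k3| →
      |(k2 : ℝ)| / 16 ≤ |(k3 : ℝ)| →
      |(k3 : ℝ)| ≤ 16 * |(k2 : ℝ)| →
      max (max |(k1 : ℝ)| |(k2 : ℝ)|) |(k3 : ℝ)| > 16 * max 1 |c| →
      |Phi3 c (k1 : ℝ) (k2 : ℝ) (k3 : ℝ)| ≥
        C * |(k3 : ℝ) - (k2 : ℝ)| *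
          (max (max |(k1 : ℝ)| |(k2 : ℝ)|) |(k3 : ℝ)|) ^ 3 := by
  refine ⟨1/68, by norm_num, ?_⟩
  intro c k1 k2 k3 hne h32 hlo hhi hN
  set a := (k1:ℝ) with ha'
  set b := (k2:ℝ) with hb'
  set d := (k3:ℝ) with hd'
  set N := max (max |a| |b|) |d| with hNdef
  rw [lt_min_iff] at h32
  have hab : 32 * |a| < |b| := by
    have := h32.1; rw [ha', hb', ← Int.cast_abs, ← Int.cast_abs]; exact_mod_cast this
  have had : 32 * |a| < |d| := by
    have := h32.2; rw [ha', hd', ← Int.cast_abs, ← Int.cast_abs]; exact_mod_cast this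
  have key : Phi3 c a b d
      = (a-b)*(d-b)*((a-b)^2+(d-b)^2+3*(a+d)^2+2*c) := by
    simp only [Phi3, phi]; ring
  have hab' : |a| ≤ |b| := by nlinarith [abs_nonneg a]
  have hN' : N = max |b| |d| := by rw [hNdef, max_eq_right hab']
  have hNb : |b| ≤ N := hN' ▸ le_max_left _ _
  have hNd : |d| ≤ N := hN' ▸ le_max_right _ _
  have hN16 : N > 16 := lt_of_le_of_lt (by nlinarith [le_max_left (1:ℝ) |c|]) hN
  have hc : |c| ≤ N / 16 := by
    have := le_max_right (1:ℝ) |c|; nlinarith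
  have hcl := abs_le.mp hc
  have haN : 32 * |a| < N := lt_of_lt_of_le hab hNb
  have hbN : |b| ≥ N / 16 := by
    rcases max_choice |b| |d| with h | h
    · rw [hN', h]; linarith [abs_nonneg b]
    · rw [hN', h]; linarith
  have hL : |a - b| ≥ 31 * |b| / 32 := by
    have h1 : |b| - |a| ≤ |a - b| := by
      have := abs_sub_abs_le_abs_sub b a
      rwa [abs_sub_comm] at this
    linarith
  have hLN : |a - b| ≥ N / 17 := by linarith
  have hNN : 16 * N ≤ N^2 := by nlinarith
  have hB : (a-b)^2+(d-b)^2+3*(a+d)^2+2*c ≥ N^2 / 2 := by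
    have hdb2 : (d-b)^2 ≥ 0 := sq_nonneg _
    have hab2 : (a-b)^2 ≥ 0 := sq_nonneg _
    have had2 : (a+d)^2 ≥ 0 := sq_nonneg _
    rcases max_choice |b| |d| with h | h
    · have hNb' : N = |b| := by rw [hN', h]
      have h0 : |a - b| ≥ 31 * N / 32 := by rw [hNb']; exact hL
      have h2 : (a - b)^2 ≥ (31 * N / 32)^2 := by
        rw [← sq_abs (a - b)]
        gcongr
      have h3 : (31 * N / 32)^2 = 961/1024 * N^2 := by ring
      linarith [hcl.1]
    · have hNd' : N = |d| := by rw [hN', h]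
      have h0 : |a + d| ≥ 31 * N / 32 := by
        have h1 : |d| - |a| ≤ |a + d| := by
          have := abs_sub_abs_le_abs_sub d (-a)
          simpa [abs_neg, sub_neg_eq_add, add_comm] using this
        rw [hNd'] at haN ⊢; linarith
      have h2 : (a + d)^2 ≥ (31 * N / 32)^2 := by
        rw [← sq_abs (a + d)]
        gcongr
      have h3 : (31 * N / 32)^2 = 961/1024 * N^2 := by ring
      linarith [hcl.1]
  have hBabs : |(a-b)^2+(d-b)^2+3*(a+d)^2+2*c| ≥ N^2 / 2 := by
    rw [abs_of_pos (by nlinarith [sq_nonneg N])]; exact hB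
  have habs : |Phi3 c a b d|
      = |a-b| * |d-b| * |(a-b)^2+(d-b)^2+3*(a+d)^2+2*c| := by
    rw [key, abs_mul, abs_mul]
  rw [habs]
  have hNpos : (0:ℝ) < N := by linarith
  calc 1/68 * |d - b| * N^3 ≤ (N/17) * |d - b| * (N^2/2) := by
        rw [show (N/17) * |d - b| * (N^2/2) = 1/34 * |d - b| * N^3 by ring]
        have := abs_nonneg (d - b)
        nlinarith [pow_nonneg (le_of_lt (by linarith : (0:ℝ) < N)) 3]
    _ ≤ |a - b| * |d - b| * |(a-b)^2+(d-b)^2+3*(a+d)^2+2*c| := by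
        gcongr
end

section
/- Suppose real numbers k1,...,k5 satisfy |k3-k4| > 256·|k1-k2| and |k5| > 14·max(|k1|,|k2|,|k3|,|k4|). Then |2[(k1-k2+k3-k4)(k5-k4) + (k1-k2)(k3-k2)]| < 3·|k1-k2+k3-k4|·|k5|. -/
theorem stmt_8 (k1 k2 k3 k4 k5 : ℝ)
    (h1 : |k3 - k4| > 256 * |k1 - k2|)
    (h2 : |k5| > 14 * max (max (max |k1| |k2|) |k3|) |k4|) :
    |2 * ((k1 - k2 + k3 - k4) * (k5 - k4) + (k1 - k2) * (k3 - k2))| <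
      3 * |k1 - k2 + k3 - k4| * |k5| := by
  set a := |k1 - k2| with ha
  set s := |k1 - k2 + k3 - k4| with hs
  have ha0 : 0 ≤ a := abs_nonneg _
  have hM2 : 14 * |k2| < |k5| := by
    have := le_max_left (max (max |k1| |k2|) |k3|) |k4|
    have h := le_max_left (max |k1| |k2|) |k3|
    have h' := le_max_right |k1| |k2|
    nlinarith [h2]
  have hM3 : 14 * |k3| < |k5| := by
    have := le_max_left (max (max |k1| |k2|) |k3|) |k4|
    have h := le_max_right (max |k1| |k2|) |k3|
    nlinarith [h2]
  have hM4 : 14 * |k4| < |k5| := by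
    have := le_max_right (max (max |k1| |k2|) |k3|) |k4|
    nlinarith [h2]
  have htri : |k3 - k4| ≤ s + a := by
    have : (k3 - k4) = (k1 - k2 + k3 - k4) + -(k1 - k2) := by ring
    rw [this]
    calc |(k1 - k2 + k3 - k4) + -(k1 - k2)| ≤ s + |-(k1 - k2)| := abs_add_le _ _
      _ = s + a := by rw [abs_neg]
  have hsa : s > 255 * a := by nlinarith
  have hs0 : 0 < s := by nlinarith
  have hL : |2 * ((k1 - k2 + k3 - k4) * (k5 - k4) + (k1 - k2) * (k3 - k2))| ≤
      2 * (s * (|k5| + |k4|) + a * (|k3| + |k2|)) := by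
    rw [abs_mul]
    have e1 : |(k1 - k2 + k3 - k4) * (k5 - k4) + (k1 - k2) * (k3 - k2)| ≤
        s * |k5 - k4| + a * |k3 - k2| := by
      calc _ ≤ |(k1 - k2 + k3 - k4) * (k5 - k4)| + |(k1 - k2) * (k3 - k2)| := abs_add_le _ _
        _ = s * |k5 - k4| + a * |k3 - k2| := by rw [abs_mul, abs_mul]
    have e2 : |k5 - k4| ≤ |k5| + |k4| := abs_sub _ _
    have e3 : |k3 - k2| ≤ |k3| + |k2| := abs_sub _ _
    have : |(2:ℝ)| = 2 := by norm_num
    rw [this]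
    nlinarith [abs_nonneg (k3 - k2)]
  have hfin : 2 * (s * (|k5| + |k4|) + a * (|k3| + |k2|)) < 3 * s * |k5| := by
    nlinarith [mul_lt_mul_of_pos_left hM4 hs0, mul_le_mul_of_nonneg_right hsa.le (abs_nonneg k3),
      mul_le_mul_of_nonneg_right hsa.le (abs_nonneg k2),
      mul_lt_mul_of_pos_left hM3 hs0, mul_lt_mul_of_pos_left hM2 hs0]
  linarith
end

section
/- Let c be a real number and let k1,...,k5 be integers satisfying |k3-k4| > 256·|k1-k2|, |k5| > 14·max(|k1|,|k2|,|k3|,|k4|), and |k5| > 16·max(1, |c|). Then |Φ5_c(k1,...,k5)| > (1/2)·|k1-k2+k3-k4|·|k5|^3, where Φ5_c(k1,...,k5) = φ_c(k1-k2+k3-k4+k5) - φ_c(k1) + φ_c(k2) - φ_c(k3) + φ_c(k4) - φ_c(k5) and φ_c(k) = k^4 + c·k^2. -/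
noncomputable def Phi5 (c k1 k2 k3 k4 k5 : ℝ) : ℝ :=
  phi c (k1 - k2 + k3 - k4 + k5) - phi c k1 + phi c k2 - phi c k3 + phi c k4 - phi c k5

set_option maxHeartbeats 1000000 in
theorem stmt_9 (c : ℝ) (k1 k2 k3 k4 k5 : ℤ)
    (h1 : |k3 - k4| > 256 * |k1 - k2|)
    (h2 : |k5| > 14 * max (max (max |k1| |k2|) |k3|) |k4|)
    (hc : (|k5| : ℝ) > 16 * max 1 |c|) :
    |Phi5 c (k1 : ℝ) (k2 : ℝ) (k3 : ℝ) (k4 : ℝ) (k5 : ℝ)| >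
      (1 / 2) * |(k1 : ℝ) - (k2 : ℝ) + (k3 : ℝ) - (k4 : ℝ)| * |(k5 : ℝ)| ^ 3 := by
  have h1' : |(k3:ℝ) - k4| > 256 * |(k1:ℝ) - k2| := by exact_mod_cast h1
  have h2' : |(k5:ℝ)| > 14 * max (max (max |(k1:ℝ)| |(k2:ℝ)|) |(k3:ℝ)|) |(k4:ℝ)| := by
    exact_mod_cast h2
  set x1 : ℝ := (k1:ℝ)
  set x2 : ℝ := (k2:ℝ)
  set x3 : ℝ := (k3:ℝ)
  set x4 : ℝ := (k4:ℝ)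
  set x5 : ℝ := (k5:ℝ)
  set a : ℝ := x1 - x2 + x3 - x4 with ha
  set A : ℝ := |a| with hA
  set K : ℝ := |x5| with hK
  set M : ℝ := max (max (max |x1| |x2|) |x3|) |x4| with hMdef
  set C : ℝ := |c| with hC
  set d12 : ℝ := |x1 - x2| with hd12
  set d34 : ℝ := |x3 - x4| with hd34
  have hM1 : |x1| ≤ M := le_max_of_le_left (le_max_of_le_left (le_max_left _ _))
  have hM2 : |x2| ≤ M := le_max_of_le_left (le_max_of_le_left (le_max_right _ _))
  have hM3 : |x3| ≤ M := le_max_of_le_left (le_max_right _ _)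
  have hM4 : |x4| ≤ M := le_max_right _ _
  have hMnn : 0 ≤ M := le_trans (abs_nonneg _) hM4
  have hCnn : 0 ≤ C := abs_nonneg _
  have hKM : K > 14 * M := h2'
  have hK16 : K > 16 := lt_of_le_of_lt (by linarith [le_max_left (1:ℝ) C]) hc
  have hKC : K > 16 * C := lt_of_le_of_lt (by linarith [le_max_right (1:ℝ) C]) hc
  have hKpos : (0:ℝ) < K := by linarith
  -- structural identity
  have key : Phi5 c x1 x2 x3 x4 x5 =
      a * ((a + 2*x5) * ((a+x5)^2 + x5^2 + c))
      - ((x1 - x2) * ((x1 + x2) * (x1^2 + x2^2 + c))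
         + (x3 - x4) * ((x3 + x4) * (x3^2 + x4^2 + c))) := by
    simp only [Phi5, phi, ha]; ring
  -- bounds on distances
  have hd12nn : 0 ≤ d12 := abs_nonneg _
  have hd34le : d34 ≤ A + d12 := by
    calc d34 = |a - (x1 - x2)| := by rw [hd34]; congr 1; rw [ha]; ring
    _ ≤ A + d12 := abs_sub a (x1 - x2)
  have hAle : A ≤ d12 + d34 := by
    calc A = |(x1 - x2) + (x3 - x4)| := by rw [hA, ha]; congr 1; ring
    _ ≤ d12 + d34 := abs_add_le _ _
  have hd12M : d12 ≤ 2 * M := by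
    calc d12 ≤ |x1| + |x2| := abs_sub _ _
    _ ≤ 2 * M := by linarith
  have hd34M : d34 ≤ 2 * M := by
    calc d34 ≤ |x3| + |x4| := abs_sub _ _
    _ ≤ 2 * M := by linarith
  have hApos : 0 < A := by linarith [h1', hd34le, hd12nn]
  have hS : d12 + d34 < (257/255) * A := by linarith [h1', hd34le, hd12nn]
  have hA4M : A ≤ 4 * M := by linarith
  have hA27 : A ≤ 2/7 * K := by linarith
  -- main term lower bound
  have hx5sq : x5 ^ 2 = K ^ 2 := (sq_abs x5).symm
  have hcge : -C ≤ c := neg_abs_le c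
  have hb1 : 2 * K - A ≤ |a + 2*x5| := by
    have h := abs_add_le (a + 2*x5) (-a)
    have h2 : |(2:ℝ) * x5| = 2 * K := by rw [abs_mul]; simp [hK]
    have h3 : a + 2*x5 + -a = 2 * x5 := by ring
    rw [h3, h2, abs_neg] at h
    linarith
  have hb2 : K^2 - C ≤ |(a+x5)^2 + x5^2 + c| := by
    have hpos : K^2 - C ≤ (a+x5)^2 + x5^2 + c := by
      linarith [sq_nonneg (a+x5), hx5sq, hcge]
    exact le_trans hpos (le_abs_self _)
  have hb1nn : (0:ℝ) ≤ 2 * K - A := by linarith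
  have h16K : 16*K ≤ K*K := mul_le_mul_of_nonneg_right hK16.le hKpos.le
  have hb2nn : (0:ℝ) ≤ K^2 - C := by have : K^2 = K*K := sq K; linarith [h16K, hKC, hK16]
  have hmain : A * ((2*K - A) * (K^2 - C)) ≤ |a * ((a + 2*x5) * ((a+x5)^2 + x5^2 + c))| := by
    rw [abs_mul, abs_mul]
    have h1 : (2*K - A) * (K^2 - C) ≤ |a + 2*x5| * |(a+x5)^2 + x5^2 + c| :=
      mul_le_mul hb1 hb2 hb2nn (le_trans hb1nn hb1)
    exact mul_le_mul_of_nonneg_left h1 (abs_nonneg a)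
  -- remainder upper bound
  have hrem : ∀ y z : ℝ, |y| ≤ M → |z| ≤ M →
      |(y + z) * (y^2 + z^2 + c)| ≤ 2*M * (2*M^2 + C) := by
    intro y z hy hz
    rw [abs_mul]
    have h1 : |y + z| ≤ 2 * M := by
      calc |y + z| ≤ |y| + |z| := abs_add_le _ _
      _ ≤ 2 * M := by linarith
    have h2 : |y^2 + z^2 + c| ≤ 2*M^2 + C := by
      calc |y^2 + z^2 + c| ≤ |y^2 + z^2| + |c| := abs_add_le _ _
      _ ≤ |y^2| + |z^2| + C := by linarith [abs_add_le (y^2) (z^2)]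
      _ ≤ 2*M^2 + C := by
          have hy2 : y^2 ≤ M^2 := sq_le_sq' (by linarith [(abs_le.mp hy).1]) (abs_le.mp hy).2
          have hz2 : z^2 ≤ M^2 := sq_le_sq' (by linarith [(abs_le.mp hz).1]) (abs_le.mp hz).2
          rw [abs_of_nonneg (sq_nonneg y), abs_of_nonneg (sq_nonneg z)]
          linarith
    exact mul_le_mul h1 h2 (abs_nonneg _) (by linarith)
  have hR : |(x1 - x2) * ((x1 + x2) * (x1^2 + x2^2 + c))
         + (x3 - x4) * ((x3 + x4) * (x3^2 + x4^2 + c))|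
      ≤ (d12 + d34) * (2*M * (2*M^2 + C)) := by
    have e1 := hrem x1 x2 hM1 hM2
    have e2 := hrem x3 x4 hM3 hM4
    calc |(x1 - x2) * ((x1 + x2) * (x1^2 + x2^2 + c))
         + (x3 - x4) * ((x3 + x4) * (x3^2 + x4^2 + c))|
        ≤ |(x1 - x2) * ((x1 + x2) * (x1^2 + x2^2 + c))|
          + |(x3 - x4) * ((x3 + x4) * (x3^2 + x4^2 + c))| := abs_add_le _ _
      _ = d12 * |(x1 + x2) * (x1^2 + x2^2 + c)|
          + d34 * |(x3 + x4) * (x3^2 + x4^2 + c)| := by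
          rw [show |(x1 - x2) * ((x1 + x2) * (x1^2 + x2^2 + c))| = |x1 - x2| * |(x1 + x2) * (x1^2 + x2^2 + c)| from abs_mul _ _,
              show |(x3 - x4) * ((x3 + x4) * (x3^2 + x4^2 + c))| = |x3 - x4| * |(x3 + x4) * (x3^2 + x4^2 + c)| from abs_mul _ _]
      _ ≤ (d12 + d34) * (2*M * (2*M^2 + C)) := by
          have t1 := mul_le_mul_of_nonneg_left e1 hd12nn
          have t2 := mul_le_mul_of_nonneg_left e2 (abs_nonneg (x3 - x4))
          linarith [t1, t2]
  -- put together
  have hPhi : A * ((2*K - A) * (K^2 - C)) - (d12 + d34) * (2*M * (2*M^2 + C))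
      ≤ |Phi5 c x1 x2 x3 x4 x5| := by
    rw [key]
    calc A * ((2*K - A) * (K^2 - C)) - (d12 + d34) * (2*M * (2*M^2 + C))
        ≤ |a * ((a + 2*x5) * ((a+x5)^2 + x5^2 + c))|
          - |(x1 - x2) * ((x1 + x2) * (x1^2 + x2^2 + c))
             + (x3 - x4) * ((x3 + x4) * (x3^2 + x4^2 + c))| := by linarith
      _ ≤ _ := abs_sub_abs_le_abs_sub _ _
  -- final numeric estimate
  have hMK : M ≤ K / 14 := by linarith
  have hsqM : M ^ 2 = M * M := sq M
  have hsqK : K ^ 2 = K * K := sq K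
  have hM2 : M * M ≤ K / 14 * (K / 14) := mul_le_mul hMK hMK hMnn (by positivity)
  have hRK : 2*M * (2*M^2 + C) ≤ (K/7) * (K^2/98 + K^2/256) := by
    have ha1 : 2*M^2 + C ≤ K^2/98 + K^2/256 := by rw [hsqM, hsqK]; linarith [h16K, hKC]
    have ha2 : (0:ℝ) ≤ 2*M^2 + C := by positivity
    have := mul_le_mul (by linarith : 2*M ≤ K/7) ha1 ha2 (by positivity : (0:ℝ) ≤ K/7)
    linarith
  have hSR : (d12 + d34) * (2*M * (2*M^2 + C)) ≤ (257/255) * A * ((K/7) * (K^2/98 + K^2/256)) := by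
    have h0 : (0:ℝ) ≤ 2*M * (2*M^2 + C) := by positivity
    calc (d12 + d34) * (2*M * (2*M^2 + C)) ≤ (257/255) * A * (2*M * (2*M^2 + C)) :=
          mul_le_mul_of_nonneg_right (le_of_lt hS) h0
      _ ≤ (257/255) * A * ((K/7) * (K^2/98 + K^2/256)) :=
          mul_le_mul_of_nonneg_left hRK (by positivity)
  have hML : A * ((12/7*K) * (K^2 - K/16)) ≤ A * ((2*K - A) * (K^2 - C)) := by
    have hh1 : 12/7*K ≤ 2*K - A := by linarith
    have hh2 : K^2 - K/16 ≤ K^2 - C := by linarith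
    have hh3 : (0:ℝ) ≤ K^2 - K/16 := by rw [hsqK]; linarith [h16K, hKpos]
    exact mul_le_mul_of_nonneg_left (mul_le_mul hh1 hh2 hh3 (by linarith)) (le_of_lt hApos)
  have hK3 : K ^ 3 = K * (K * K) := by ring
  have h16K2 : 16*(K*K) ≤ K*(K*K) :=
    mul_le_mul_of_nonneg_right hK16.le (by positivity)
  have hnum : (1/2) * K^3 + (257/255) * ((K/7) * (K^2/98 + K^2/256))
      < (12/7*K) * (K^2 - K/16) := by
    rw [hK3, hsqK]; linarith [h16K2, mul_nonneg hKpos.le hKpos.le]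
  have hnumA := mul_lt_mul_of_pos_left hnum hApos
  have hgoal : (1/2) * A * K^3 < A * ((2*K - A) * (K^2 - C)) - (d12 + d34) * (2*M * (2*M^2 + C)) := by
    linarith [hnumA, hML, hSR]
  calc (1/2) * A * K^3 < A * ((2*K - A) * (K^2 - C)) - (d12 + d34) * (2*M * (2*M^2 + C)) := hgoal
    _ ≤ |Phi5 c x1 x2 x3 x4 x5| := hPhi
end

section
/- Let c be a real number and let k1,...,k5 be integers satisfying |k5|^(3/4) > 256·max(|k1|,|k2|,|k3|,|k4|), k1-k2+k3-k4 ≠ 0, and |k5| > 16·max(1, |c|). Then |Φ5_c(k1,...,k5)| ≥ |k1-k2+k3-k4|·|k5|^3, where Φ5_c(k1,...,k5) = φ_c(k1-k2+k3-k4+k5) - φ_c(k1) + φ_c(k2) - φ_c(k3) + φ_c(k4) - φ_c(k5) and φ_c(k) = k^4 + c·k^2. -/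
/-! Write `m = k1 - k2 + k3 - k4` and `N = k5`. Then
`Φ5 = 4 m N³ + (φ(m + N) - φ(N) - 4 m N³) - (φ(k1) - φ(k2) + φ(k3) - φ(k4))`.
Since `|m| ≤ 4 max |kᵢ| ≤ |N| / 64` and `|c| ≤ |N| / 16`, the Taylor remainder of `φ` at `N` is at
most `|m| |N|³`, and the condition `max |kᵢ| < |N|^(3/4) / 256` makes the low-frequency sum at
most `|N|³`. As `|m| ≥ 1`, this leaves `|Φ5| ≥ (4|m| - |m| - 1) |N|³ ≥ |m| |N|³`. -/

lemma pow_four_lt_pow_three_of_lt_rpow {x y : ℝ} (hx : 0 ≤ x) (hy : 0 ≤ y)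
    (h : y < x ^ ((3 : ℝ) / 4)) : y ^ 4 < x ^ 3 := by
  calc y ^ 4 < (x ^ ((3 : ℝ) / 4)) ^ 4 := by gcongr
    _ = x ^ 3 := by
      rw [← Real.rpow_natCast, ← Real.rpow_mul hx, ← Real.rpow_natCast]; norm_num

lemma abs_sub_add_sub_le {α : Type*} [CommRing α] [LinearOrder α] [IsStrictOrderedRing α]
    {a b c d M : α} (ha : |a| ≤ M) (hb : |b| ≤ M) (hc : |c| ≤ M) (hd : |d| ≤ M) :
    |a - b + c - d| ≤ 4 * M := by
  obtain ⟨ha₁, ha₂⟩ := abs_le.mp ha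
  obtain ⟨hb₁, hb₂⟩ := abs_le.mp hb
  obtain ⟨hc₁, hc₂⟩ := abs_le.mp hc
  obtain ⟨hd₁, hd₂⟩ := abs_le.mp hd
  exact abs_le.mpr ⟨by linarith, by linarith⟩

lemma abs_sub_abs_sub_abs_le_abs_add_sub {α : Type*} [AddCommGroup α] [LinearOrder α]
    [IsOrderedAddMonoid α] (a b c : α) : |a| - |b| - |c| ≤ |a + b - c| := by
  have := abs_add_three (a + b - c) (-b) c
  rw [abs_neg, show a + b - c + -b + c = a by abel] at this
  rwa [sub_sub, sub_le_iff_le_add, ← add_assoc]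

lemma abs_phi_le (c : ℝ) {x M : ℝ} (hx : |x| ≤ M) : |phi c x| ≤ M ^ 4 + |c| * M ^ 2 := by
  calc |phi c x| ≤ |x ^ 4| + |c * x ^ 2| := abs_add_le _ _
    _ = |x| ^ 4 + |c| * |x| ^ 2 := by rw [abs_mul, abs_pow, abs_pow]
    _ ≤ M ^ 4 + |c| * M ^ 2 := by gcongr

lemma abs_phi_alternating_le {c A M x₁ x₂ x₃ x₄ : ℝ} (hc : 16 * |c| ≤ A)
    (hM : (256 * M) ^ 4 ≤ A ^ 3) (hMA : 256 * M ≤ A) (h₁ : |x₁| ≤ M) (h₂ : |x₂| ≤ M)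
    (h₃ : |x₃| ≤ M) (h₄ : |x₄| ≤ M) :
    |phi c x₁ - phi c x₂ + phi c x₃ - phi c x₄| ≤ A ^ 3 := by
  have hM0 : 0 ≤ M := (abs_nonneg _).trans h₁
  have hA0 : 0 ≤ A := by linarith
  have hcM : 16 * |c| * (256 * M) ^ 2 ≤ A * A ^ 2 := by gcongr
  calc _ ≤ 4 * (M ^ 4 + |c| * M ^ 2) :=
        abs_sub_add_sub_le (abs_phi_le c h₁) (abs_phi_le c h₂) (abs_phi_le c h₃)
          (abs_phi_le c h₄)
    _ ≤ A ^ 3 := by nlinarith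

lemma abs_phi_add_sub_phi_sub_le (c : ℝ) {m N : ℝ} (hN : 1 ≤ |N|) (hc : 16 * |c| ≤ |N|)
    (hm : 64 * |m| ≤ |N|) :
    |phi c (m + N) - phi c N - 4 * m * N ^ 3| ≤ |m| * |N| ^ 3 := by
  set a := |m|
  set A := |N|
  have ha : 0 ≤ a := abs_nonneg m
  have hA : 0 ≤ A := abs_nonneg N
  have hexpand : phi c (m + N) - phi c N - 4 * m * N ^ 3
      = 6 * m ^ 2 * N ^ 2 + 4 * m ^ 3 * N + m ^ 4 + c * (2 * m * N + m ^ 2) := by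
    unfold phi; ring
  have e₁ : 64 * a * (a * A ^ 2) ≤ A * (a * A ^ 2) := by gcongr
  have e₂ : (64 * a) ^ 2 * (a * A) ≤ A ^ 2 * (a * A) := by gcongr
  have e₃ : (64 * a) ^ 3 * a ≤ A ^ 3 * a := by gcongr
  have e₄ : 16 * |c| * (2 * a * A + a ^ 2) ≤ A * (2 * a * A + a ^ 2) := by gcongr
  have e₅ : 64 * a * (a * A) ≤ A * (a * A) := by gcongr
  have e₆ : a * A ^ 2 ≤ a * A ^ 3 :=
    mul_le_mul_of_nonneg_left (pow_le_pow_right₀ hN (by norm_num)) ha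
  rw [hexpand]
  calc _ ≤ |6 * m ^ 2 * N ^ 2 + 4 * m ^ 3 * N + m ^ 4| + |c * (2 * m * N + m ^ 2)| :=
        abs_add_le _ _
    _ ≤ (|6 * m ^ 2 * N ^ 2| + |4 * m ^ 3 * N| + |m ^ 4|) + |c| * (|2 * m * N| + |m ^ 2|) := by
        rw [abs_mul]; gcongr; exacts [abs_add_three _ _ _, abs_add_le _ _]
    _ = 6 * a ^ 2 * A ^ 2 + 4 * a ^ 3 * A + a ^ 4 + |c| * (2 * a * A + a ^ 2) := by
        simp only [a, A, abs_mul, abs_pow]; norm_num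
    _ ≤ a * A ^ 3 := by nlinarith [mul_nonneg ha (pow_nonneg hA 3)]

theorem stmt_10 (c : ℝ) (k1 k2 k3 k4 k5 : ℤ)
    (h1 : |(k5 : ℝ)| ^ ((3 : ℝ) / 4) >
      256 * max (max (max |(k1 : ℝ)| |(k2 : ℝ)|) |(k3 : ℝ)|) |(k4 : ℝ)|)
    (h2 : k1 - k2 + k3 - k4 ≠ 0)
    (hc : (|k5| : ℝ) > 16 * max 1 |c|) :
    |Phi5 c (k1 : ℝ) (k2 : ℝ) (k3 : ℝ) (k4 : ℝ) (k5 : ℝ)| ≥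
      |(k1 : ℝ) - (k2 : ℝ) + (k3 : ℝ) - (k4 : ℝ)| * |(k5 : ℝ)| ^ 3 := by
  set M := max (max (max |(k1 : ℝ)| |(k2 : ℝ)|) |(k3 : ℝ)|) |(k4 : ℝ)|
  have hm1 : 1 ≤ |(k1 : ℝ) - k2 + k3 - k4| := by exact_mod_cast Int.one_le_abs h2
  set m : ℝ := (k1 : ℝ) - k2 + k3 - k4
  set N : ℝ := (k5 : ℝ)
  have hN : 1 ≤ |N| := by linarith [le_max_left 1 |c|]
  have hcN : 16 * |c| ≤ |N| := by linarith [le_max_right 1 |c|]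
  have hM4 : (256 * M) ^ 4 ≤ |N| ^ 3 :=
    (pow_four_lt_pow_three_of_lt_rpow (abs_nonneg _) (by positivity) h1).le
  have hMN : 256 * M ≤ |N| := h1.le.trans (Real.rpow_le_self_of_one_le hN (by norm_num))
  have hk1 : |(k1 : ℝ)| ≤ M := le_max_of_le_left (le_max_of_le_left (le_max_left _ _))
  have hk2 : |(k2 : ℝ)| ≤ M := le_max_of_le_left (le_max_of_le_left (le_max_right _ _))
  have hk3 : |(k3 : ℝ)| ≤ M := le_max_of_le_left (le_max_right _ _)
  have hk4 : |(k4 : ℝ)| ≤ M := le_max_right _ _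
  have hmN : 64 * |m| ≤ |N| := by linarith [abs_sub_add_sub_le hk1 hk2 hk3 hk4]
  have hR := abs_phi_add_sub_phi_sub_le c hN hcN hmN
  have hS := abs_phi_alternating_le hcN hM4 hMN hk1 hk2 hk3 hk4
  have hN3 : |N| ^ 3 ≤ |m| * |N| ^ 3 := le_mul_of_one_le_left (by positivity) hm1
  calc |m| * |N| ^ 3
      ≤ |4 * m * N ^ 3| - |phi c (m + N) - phi c N - 4 * m * N ^ 3|
          - |phi c k1 - phi c k2 + phi c k3 - phi c k4| := by
        rw [abs_mul, abs_mul, abs_pow, Nat.abs_ofNat]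
        linarith [mul_nonneg (abs_nonneg m) (pow_nonneg (abs_nonneg N) 3)]
    _ ≤ |4 * m * N ^ 3 + (phi c (m + N) - phi c N - 4 * m * N ^ 3)
          - (phi c k1 - phi c k2 + phi c k3 - phi c k4)| :=
        abs_sub_abs_sub_abs_le_abs_add_sub _ _ _
    _ = |Phi5 c k1 k2 k3 k4 N| := by
        rw [Phi5, show (k1 : ℝ) - k2 + k3 - k4 + N = m + N from rfl]
        congr 1; ring
end

section
/- Let c be a real number and let k1,...,k5 be integers satisfying 14·max(|k1|,|k2|,|k3|) < min(|k4|, |k5|, |k4-k5|), |k4|/16 ≤ |k5| ≤ 16·|k4|, and max(|k1|,...,|k5|) > 16·max(1, |c|). Then |Φ5_c(k1,...,k5)| ≥ (1/16)·|k4-k5|·max(|k4|,|k5|)^3, where Φ5_c(k1,...,k5) = φ_c(k1-k2+k3-k4+k5) - φ_c(k1) + φ_c(k2) - φ_c(k3) + φ_c(k4) - φ_c(k5) and φ_c(k) = k^4 + c·k^2. -/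
set_option maxHeartbeats 1000000

private theorem key1 (A B D M C : ℝ) (hM : 0 ≤ M) (hC : 0 ≤ C)
    (h1 : 14*M ≤ A) (h2 : 14*M ≤ B) (h3 : 14*M ≤ D)
    (h4 : 16*C ≤ A) (h5 : 16 ≤ A) (h6 : A ≤ 16*B) (h7 : B ≤ A) (h8 : D ≤ A+B) :
    (1/16)*D*A^3 + 2*A*D*C + 3*M*(3*M+2*D)*((3*M+D)^2+D^2+C) + 3*M^4 + 3*C*M^2
      ≤ A*D^3 + A^3*D + 3*A*B^2*D := by
  have hD : 0 ≤ D := le_trans (by linarith) h3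
  have hA : 0 ≤ A := by linarith
  have hB : 0 ≤ B := by linarith
  have hAD : 0 ≤ A*D := mul_nonneg hA hD
  have m2 : 196*M^2 ≤ A*D := by nlinarith
  have m3 : 2744*(M^3) ≤ A*D^2 := by
    nlinarith [mul_le_mul_of_nonneg_left h3 (sq_nonneg M), mul_le_mul_of_nonneg_right m2 hD]
  have m4 : 38416*(M^4) ≤ A*D^3 := by
    nlinarith [mul_le_mul_of_nonneg_left h3 (pow_nonneg hM 3), mul_le_mul_of_nonneg_right m3 hD]
  have m3d : 2744*(M^3*D) ≤ A*D^3 := by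
    nlinarith [mul_le_mul_of_nonneg_right m3 hD]
  have m2d : 196*(M^2*D^2) ≤ A*D^3 := by
    nlinarith [mul_le_mul_of_nonneg_right m2 (sq_nonneg D)]
  have mdd : 14*(M*D^3) ≤ A*D^3 := by
    nlinarith [mul_le_mul_of_nonneg_right h1 (pow_nonneg hD 3)]
  have cm : 3136*(C*M^2) ≤ A^2*D := by
    nlinarith [mul_le_mul h4 m2 (by positivity) hA]
  have cmd : 224*(C*(M*D)) ≤ A^2*D := by
    have h : (16*C)*(14*M) ≤ A*A := mul_le_mul h4 h1 (by linarith) hA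
    nlinarith [mul_le_mul_of_nonneg_right h hD]
  have cad : 16*(C*(A*D)) ≤ A^2*D := by
    nlinarith [mul_le_mul_of_nonneg_right h4 hAD]
  have a2d : 16*(A^2*D) ≤ A^3*D := by
    nlinarith [mul_nonneg (mul_nonneg (mul_nonneg hA hA) hD) (by linarith : (0:ℝ) ≤ A - 16)]
  have dd : A*D^3 ≤ 2*(A^3*D) + 2*(A*B^2*D) := by
    nlinarith [mul_nonneg (mul_nonneg hA hD) (mul_nonneg (by linarith : (0:ℝ) ≤ A+B-D) (by linarith : (0:ℝ) ≤ A+B+D)), mul_nonneg (mul_nonneg hA hD) (sq_nonneg (A-B))]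
  have hab : 0 ≤ A*B^2*D := by positivity
  have had3 : 0 ≤ A*D^3 := by positivity
  have ha3d : 0 ≤ A^3*D := by positivity
  linarith [m4, m3d, m2d, mdd, cm, cmd, cad, a2d, dd, hab, had3, ha3d]

private theorem key2 (A B D M C : ℝ) (hM : 0 ≤ M) (hC : 0 ≤ C)
    (h1 : 14*M ≤ A) (h2 : 14*M ≤ B) (h3 : 14*M ≤ D)
    (h4 : 16*C ≤ B) (h5 : 16 ≤ B) (h6 : B ≤ 16*A) (h7 : A ≤ B) (h8 : D ≤ A+B) :
    (1/16)*D*B^3 + 2*A*D*C + 3*M*(3*M+2*D)*((3*M+D)^2+D^2+C) + 3*M^4 + 3*C*M^2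
      ≤ A*D^3 + A^3*D + 3*A*B^2*D := by
  have hD : 0 ≤ D := le_trans (by linarith) h3
  have hA : 0 ≤ A := by linarith
  have hB : 0 ≤ B := by linarith
  have hAD : 0 ≤ A*D := mul_nonneg hA hD
  have m2 : 196*M^2 ≤ A*D := by nlinarith
  have m3 : 2744*(M^3) ≤ A*D^2 := by
    nlinarith [mul_le_mul_of_nonneg_left h3 (sq_nonneg M), mul_le_mul_of_nonneg_right m2 hD]
  have m4 : 38416*(M^4) ≤ A*D^3 := by
    nlinarith [mul_le_mul_of_nonneg_left h3 (pow_nonneg hM 3), mul_le_mul_of_nonneg_right m3 hD]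
  have m3d : 2744*(M^3*D) ≤ A*D^3 := by
    nlinarith [mul_le_mul_of_nonneg_right m3 hD]
  have m2d : 196*(M^2*D^2) ≤ A*D^3 := by
    nlinarith [mul_le_mul_of_nonneg_right m2 (sq_nonneg D)]
  have mdd : 14*(M*D^3) ≤ A*D^3 := by
    nlinarith [mul_le_mul_of_nonneg_right h1 (pow_nonneg hD 3)]
  have cm : 3136*(C*M^2) ≤ B*(A*D) := by
    nlinarith [mul_le_mul h4 m2 (by positivity) hB]
  have cmd : 224*(C*(M*D)) ≤ B*(A*D) := by
    have h : (16*C)*(14*M) ≤ B*A := mul_le_mul h4 h1 (by linarith) hB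
    nlinarith [mul_le_mul_of_nonneg_right h hD]
  have cad : 16*(C*(A*D)) ≤ B*(A*D) := by
    nlinarith [mul_le_mul_of_nonneg_right h4 hAD]
  have b2d : 16*(B*(A*D)) ≤ A*B^2*D := by
    nlinarith [mul_nonneg (mul_nonneg hB hAD) (by linarith : (0:ℝ) ≤ B - 16)]
  have kb : D*B^3 ≤ 16*(A*B^2*D) := by
    nlinarith [mul_nonneg (mul_nonneg (mul_nonneg hB hB) hD) (by linarith : (0:ℝ) ≤ 16*A - B)]
  have dd : A*D^3 ≤ 2*(A^3*D) + 2*(A*B^2*D) := by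
    nlinarith [mul_nonneg (mul_nonneg hA hD) (mul_nonneg (by linarith : (0:ℝ) ≤ A+B-D) (by linarith : (0:ℝ) ≤ A+B+D)), mul_nonneg (mul_nonneg hA hD) (sq_nonneg (A-B))]
  have hab : 0 ≤ A*B^2*D := by positivity
  have had3 : 0 ≤ A*D^3 := by positivity
  have ha3d : 0 ≤ A^3*D := by positivity
  linarith [m4, m3d, m2d, mdd, cm, cmd, cad, b2d, kb, dd, hab, had3, ha3d]

private theorem absquad (c M x : ℝ) (hx : |x| ≤ M) : |x^4 + c*x^2| ≤ M^4 + M^2*|c| := by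
  have hM : 0 ≤ M := le_trans (abs_nonneg x) hx
  have h2' : x^2 ≤ M^2 := by nlinarith [abs_nonneg x, sq_abs x]
  have h4' : x^4 ≤ M^4 := by nlinarith [sq_nonneg x, sq_nonneg (x^2 - M^2), sq_nonneg (x^2 + M^2)]
  calc |x^4 + c*x^2| ≤ |x^4| + |c*x^2| := abs_add_le _ _
  _ = x^4 + x^2*|c| := by
      rw [abs_mul, abs_of_nonneg (by positivity : (0:ℝ) ≤ x^4), abs_of_nonneg (sq_nonneg x)]; ring
  _ ≤ M^4 + M^2*|c| := by nlinarith [abs_nonneg c]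

theorem stmt_11 (c : ℝ) (k1 k2 k3 k4 k5 : ℤ)
    (h1 : 14 * max (max |k1| |k2|) |k3| < min (min |k4| |k5|) |k4 - k5|)
    (h2 : |(k4 : ℝ)| / 16 ≤ |(k5 : ℝ)|)
    (h3 : |(k5 : ℝ)| ≤ 16 * |(k4 : ℝ)|)
    (hc : max (max (max (max |(k1 : ℝ)| |(k2 : ℝ)|) |(k3 : ℝ)|) |(k4 : ℝ)|) |(k5 : ℝ)| >
      16 * max 1 |c|) :
    |Phi5 c (k1 : ℝ) (k2 : ℝ) (k3 : ℝ) (k4 : ℝ) (k5 : ℝ)| ≥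
      (1 / 16) * |(k4 : ℝ) - (k5 : ℝ)| * (max |(k4 : ℝ)| |(k5 : ℝ)|) ^ 3 := by
  have h1R : 14 * max (max |(k1:ℝ)| |(k2:ℝ)|) |(k3:ℝ)|
      < min (min |(k4:ℝ)| |(k5:ℝ)|) |(k4:ℝ) - (k5:ℝ)| := by exact_mod_cast h1
  set x1 : ℝ := (k1 : ℝ)
  set x2 : ℝ := (k2 : ℝ)
  set x3 : ℝ := (k3 : ℝ)
  set a : ℝ := (k4 : ℝ)
  set b : ℝ := (k5 : ℝ)
  set M : ℝ := max (max |x1| |x2|) |x3| with hMdef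
  set A : ℝ := |a| with hAdef
  set B : ℝ := |b| with hBdef
  set D : ℝ := |a - b| with hDdef
  have hM0 : 0 ≤ M := le_trans (abs_nonneg x1) (le_trans (le_max_left _ _) (le_max_left _ _))
  have hMA : 14 * M < A := lt_of_lt_of_le h1R (le_trans (min_le_left _ _) (min_le_left _ _))
  have hMB : 14 * M < B := lt_of_lt_of_le h1R (le_trans (min_le_left _ _) (min_le_right _ _))
  have hMD : 14 * M < D := lt_of_lt_of_le h1R (min_le_right _ _)
  have hA0 : 0 ≤ A := abs_nonneg _
  have hB0 : 0 ≤ B := abs_nonneg _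
  have hD0 : 0 ≤ D := abs_nonneg _
  set K : ℝ := max A B with hKdef
  have hAK : A ≤ K := le_max_left _ _
  have hBK : B ≤ K := le_max_right _ _
  have hbig : max (max (max (max |x1| |x2|) |x3|) A) B ≤ K := by
    apply max_le (max_le _ hAK) hBK
    exact le_trans (le_of_lt (by linarith)) hAK
  have hK16 : 16 < K := lt_of_le_of_lt (by simp) (lt_of_lt_of_le hc hbig)
  have hcK : 16 * |c| < K := lt_of_le_of_lt
    (by have := le_max_right (1:ℝ) |c|; linarith) (lt_of_lt_of_le hc hbig)
  have hc0 : 0 ≤ |c| := abs_nonneg c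
  set m : ℝ := x1 - x2 + x3 with hmdef
  set Main : ℝ := a * (a - b) * ((a - b)^2 + a^2 + 3*b^2 + 2*c) with hMaindef
  set Err : ℝ := m*(m - 2*(a-b))*((m - (a-b))^2 + (a-b)^2) + c*(m*(m - 2*(a-b)))
      - (x1^4 + c*x1^2) + (x2^4 + c*x2^2) - (x3^4 + c*x3^2) with hErrdef
  have hid : Phi5 c x1 x2 x3 a b = Main + Err := by
    simp only [Phi5, phi, hMaindef, hErrdef, hmdef]; ring
  have hA16 : K ≤ 16 * A := max_le (by linarith) (by linarith [h3])
  have hB16 : K ≤ 16 * B := max_le (by linarith [h2]) (by linarith)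
  have hP : 0 ≤ (a - b)^2 + a^2 + 3*b^2 + 2*c := by
    have ha2 : A^2 ≤ a^2 := by rw [hAdef, sq_abs]
    have hb2 : B^2 ≤ b^2 := by rw [hBdef, sq_abs]
    nlinarith [sq_nonneg (a - b), neg_abs_le c,
      mul_le_mul hA16 hA16 (by linarith) (by positivity),
      mul_le_mul hB16 hB16 (by linarith) (by positivity)]
  have hMainAbs : |Main| = A * D * ((a - b)^2 + a^2 + 3*b^2 + 2*c) := by
    rw [hMaindef, abs_mul, abs_mul, abs_of_nonneg hP, hAdef, hDdef]
  have e1 : |x1| ≤ M := le_trans (le_max_left _ _) (le_max_left _ _)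
  have e2 : |x2| ≤ M := le_trans (le_max_right _ _) (le_max_left _ _)
  have e3 : |x3| ≤ M := le_max_right _ _
  have hmb : |m| ≤ 3 * M := by
    calc |m| = |x1 - x2 + x3| := rfl
    _ ≤ |x1 - x2| + |x3| := abs_add_le _ _
    _ ≤ |x1| + |x2| + |x3| := by linarith [abs_sub x1 x2]
    _ ≤ 3 * M := by linarith
  have hm2d : |m - 2*(a-b)| ≤ 3*M + 2*D := by
    calc |m - 2*(a-b)| ≤ |m| + |2*(a-b)| := abs_sub _ _
    _ = |m| + 2*D := by rw [abs_mul, hDdef]; norm_num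
    _ ≤ 3*M + 2*D := by linarith
  have hnd : |m - (a-b)| ≤ 3*M + D := by
    calc |m - (a-b)| ≤ |m| + |a-b| := abs_sub _ _
    _ ≤ 3*M + D := by have hd : |a-b| = D := rfl; linarith
  have hErrB : |Err| ≤ 3*M*(3*M+2*D)*((3*M+D)^2 + D^2 + |c|) + 3*M^4 + 3*M^2*|c| := by
    have t1 : |m*(m - 2*(a-b))*((m - (a-b))^2 + (a-b)^2)| ≤ 3*M*(3*M+2*D)*((3*M+D)^2 + D^2) := by
      rw [abs_mul, abs_mul]
      have hsq : (m - (a-b))^2 + (a-b)^2 ≤ (3*M+D)^2 + D^2 := by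
        have h1' : (m-(a-b))^2 ≤ (3*M+D)^2 := by
          nlinarith [abs_nonneg (m - (a-b)), sq_abs (m - (a-b))]
        have h2' : (a-b)^2 ≤ D^2 := by rw [hDdef, sq_abs]
        linarith
      have habs : |(m - (a-b))^2 + (a-b)^2| = (m - (a-b))^2 + (a-b)^2 :=
        abs_of_nonneg (by positivity)
      rw [habs]
      apply mul_le_mul (mul_le_mul hmb hm2d (abs_nonneg _) (by linarith)) hsq
        (by positivity) (by positivity)
    have t2 : |c*(m*(m - 2*(a-b)))| ≤ |c| * (3*M*(3*M+2*D)) := by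
      rw [abs_mul, abs_mul]
      apply mul_le_mul_of_nonneg_left _ hc0
      exact mul_le_mul hmb hm2d (abs_nonneg _) (by linarith)
    have u1 := absquad c M x1 e1
    have u2 := absquad c M x2 e2
    have u3 := absquad c M x3 e3
    have tri : |Err| ≤ |m*(m - 2*(a-b))*((m - (a-b))^2 + (a-b)^2)| + |c*(m*(m - 2*(a-b)))|
        + |x1^4 + c*x1^2| + |x2^4 + c*x2^2| + |x3^4 + c*x3^2| := by
      rw [hErrdef]
      calc |m*(m - 2*(a-b))*((m - (a-b))^2 + (a-b)^2) + c*(m*(m - 2*(a-b)))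
          - (x1^4 + c*x1^2) + (x2^4 + c*x2^2) - (x3^4 + c*x3^2)|
          ≤ |m*(m - 2*(a-b))*((m - (a-b))^2 + (a-b)^2) + c*(m*(m - 2*(a-b)))
          - (x1^4 + c*x1^2) + (x2^4 + c*x2^2)| + |x3^4 + c*x3^2| := abs_sub _ _
      _ ≤ |m*(m - 2*(a-b))*((m - (a-b))^2 + (a-b)^2) + c*(m*(m - 2*(a-b)))
          - (x1^4 + c*x1^2)| + |x2^4 + c*x2^2| + |x3^4 + c*x3^2| := by
            linarith [abs_add_le (m*(m - 2*(a-b))*((m - (a-b))^2 + (a-b)^2) + c*(m*(m - 2*(a-b)))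
          - (x1^4 + c*x1^2)) (x2^4 + c*x2^2)]
      _ ≤ |m*(m - 2*(a-b))*((m - (a-b))^2 + (a-b)^2) + c*(m*(m - 2*(a-b)))|
          + |x1^4 + c*x1^2| + |x2^4 + c*x2^2| + |x3^4 + c*x3^2| := by
            linarith [abs_sub (m*(m - 2*(a-b))*((m - (a-b))^2 + (a-b)^2)
              + c*(m*(m - 2*(a-b)))) (x1^4 + c*x1^2)]
      _ ≤ |m*(m - 2*(a-b))*((m - (a-b))^2 + (a-b)^2)| + |c*(m*(m - 2*(a-b)))|
          + |x1^4 + c*x1^2| + |x2^4 + c*x2^2| + |x3^4 + c*x3^2| := by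
            linarith [abs_add_le (m*(m - 2*(a-b))*((m - (a-b))^2 + (a-b)^2))
              (c*(m*(m - 2*(a-b))))]
    linarith [t1, t2, u1, u2, u3, tri]
  have hMainLow : A*D^3 + A^3*D + 3*A*B^2*D - 2*A*D*|c| ≤ |Main| := by
    rw [hMainAbs]
    have h1' : (a-b)^2 = D^2 := by rw [hDdef, sq_abs]
    have h2' : a^2 = A^2 := by rw [hAdef, sq_abs]
    have h3' : b^2 = B^2 := by rw [hBdef, sq_abs]
    rw [h1', h2', h3']
    have hnc : (0:ℝ) ≤ A*D*(c + |c|) :=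
      mul_nonneg (mul_nonneg hA0 hD0) (by linarith [neg_abs_le c])
    linarith only [hnc]
  have hDle : D ≤ A + B := by
    rw [hDdef, hAdef, hBdef]
    simpa [sub_eq_add_neg, abs_neg] using abs_add_le a (-b)
  have hkey : (1/16)*D*K^3 + 2*A*D*|c| + 3*M*(3*M+2*D)*((3*M+D)^2+D^2+|c|)
      + 3*M^4 + 3 * |c| * M^2 ≤ A*D^3 + A^3*D + 3*A*B^2*D := by
    rcases le_total B A with hBA | hAB
    · have hKA : K = A := max_eq_left hBA
      rw [hKA]
      exact key1 A B D M |c| hM0 hc0 (le_of_lt hMA) (le_of_lt hMB) (le_of_lt hMD)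
        (by rw [hKA] at hcK; linarith) (by rw [hKA] at hK16; linarith)
        (by rw [hKA] at hB16; linarith) hBA hDle
    · have hKB : K = B := max_eq_right hAB
      rw [hKB]
      exact key2 A B D M |c| hM0 hc0 (le_of_lt hMA) (le_of_lt hMB) (le_of_lt hMD)
        (by rw [hKB] at hcK; linarith) (by rw [hKB] at hK16; linarith)
        (by rw [hKB] at hA16; linarith) hAB hDle
  have hlow : |Main| - |Err| ≤ |Phi5 c x1 x2 x3 a b| := by
    have h : |Main| ≤ |Phi5 c x1 x2 x3 a b| + |Err| := by
      calc |Main| = |Phi5 c x1 x2 x3 a b - Err| := by rw [hid]; ring_nf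
      _ ≤ |Phi5 c x1 x2 x3 a b| + |Err| := abs_sub _ _
    linarith
  have hfin : (1/16)*D*K^3 ≤ |Phi5 c x1 x2 x3 a b| := by linarith
  calc (1 / 16) * |a - b| * (max |a| |b|) ^ 3 = (1/16)*D*K^3 := by rw [← hDdef, ← hKdef]
  _ ≤ |Phi5 c x1 x2 x3 a b| := hfin
end

section
/- Let c be a real number and let k1,...,k5 be integers satisfying 14·max(|k1|,|k2|,|k4|) < min(|k3|, |k5|), |k3|/16 ≤ |k5| ≤ 16·|k3|, and max(|k1|,...,|k5|) > 16·max(1, |c|). Then |Φ5_c(k1,...,k5)| ≥ (1/64)·max(|k3|,|k5|)^4, where Φ5_c(k1,...,k5) = φ_c(k1-k2+k3-k4+k5) - φ_c(k1) + φ_c(k2) - φ_c(k3) + φ_c(k4) - φ_c(k5) and φ_c(k) = k^4 + c·k^2. -/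
set_option maxHeartbeats 1000000

lemma abs_eq_of_sq_eq {x y : ℝ} (hy : 0 ≤ y) (h : x ^ 2 = y ^ 2) : |x| = y := by
  rw [abs_eq hy]
  have h0 : (x - y) * (x + y) = 0 := by ring_nf; linarith
  rcases mul_eq_zero.mp h0 with h' | h'
  · left; linarith
  · right; linarith

lemma quart_pos (a b : ℝ) (ha : 0 ≤ a) (hb : 0 ≤ b)
    (hb4 : b ^ 4 ≤ a ^ 3 * b) (hab4 : a ^ 4 ≤ 16 * (a ^ 3 * b)) :
    a ^ 4 + b ^ 4 + (15/112) * a ^ 4 ≤ (a + (11/14) * b) ^ 4 := by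
  nlinarith [mul_nonneg (mul_nonneg ha ha) (mul_nonneg hb hb),
    mul_nonneg (mul_nonneg ha hb) (mul_nonneg hb hb),
    mul_nonneg (mul_nonneg hb hb) (mul_nonneg hb hb)]

lemma quart_neg (a b : ℝ) (hb : 0 ≤ b) (hba : b ≤ a) :
    (a - (11/14) * b) ^ 4 ≤ a ^ 4 - (11/14) * (a ^ 3 * b) := by
  have hau : (0:ℝ) ≤ a - (11/14) * b := by linarith
  nlinarith [mul_nonneg (mul_nonneg hb hau) (sq_nonneg ((11/14) * b - (3/2) * a)),
    mul_nonneg (mul_nonneg hb hau) (sq_nonneg a)]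

lemma master (c x1 x2 x3 x4 x5 : ℝ)
    (h1 : 14 * |x1| < |x5|) (h2 : 14 * |x2| < |x5|) (h4 : 14 * |x4| < |x5|)
    (hba : |x5| ≤ |x3|) (hab : |x3| ≤ 16 * |x5|)
    (hN : 16 < |x3|) (hcN : 16 * |c| < |x3|) :
    |Phi5 c x1 x2 x3 x4 x5| ≥ (1 / 64) * |x3| ^ 4 := by
  set s : ℝ := x1 - x2 + x3 - x4 + x5 with hs
  have hA0 : (0:ℝ) ≤ |x1| := abs_nonneg _
  have hB0 : (0:ℝ) ≤ |x2| := abs_nonneg _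
  have hD0 : (0:ℝ) ≤ |x4| := abs_nonneg _
  have ha0 : (0:ℝ) < |x3| := by linarith
  have hb0 : (0:ℝ) < |x5| := by linarith
  have hS0 : (0:ℝ) ≤ |s| := abs_nonneg _
  have hc0 : (0:ℝ) ≤ |c| := abs_nonneg _
  have p4 : ∀ t : ℝ, t ^ 4 = |t| ^ 4 := fun t => by
    rw [← abs_pow]; exact (abs_of_nonneg (by positivity)).symm
  have p2 : ∀ t : ℝ, t ^ 2 = |t| ^ 2 := fun t => (sq_abs t).symm
  have hPhi : Phi5 c x1 x2 x3 x4 x5 =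
      |s| ^ 4 - |x1| ^ 4 + |x2| ^ 4 - |x3| ^ 4 + |x4| ^ 4 - |x5| ^ 4 +
      c * (|s| ^ 2 - |x1| ^ 2 + |x2| ^ 2 - |x3| ^ 2 + |x4| ^ 2 - |x5| ^ 2) := by
    simp only [Phi5, phi, ← hs]
    linear_combination p4 s - p4 x1 + p4 x2 - p4 x3 + p4 x4 - p4 x5 +
      c * (p2 s - p2 x1 + p2 x2 - p2 x3 + p2 x4 - p2 x5)
  -- bound on the c-term
  have hXabs : |(|s| ^ 2 - |x1| ^ 2 + |x2| ^ 2 - |x3| ^ 2 + |x4| ^ 2 - |x5| ^ 2)| ≤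
      |s| ^ 2 + |x1| ^ 2 + |x2| ^ 2 + |x3| ^ 2 + |x4| ^ 2 + |x5| ^ 2 := by
    rw [abs_le]
    constructor <;>
      linarith only [sq_nonneg |s|, sq_nonneg |x1|, sq_nonneg |x2|, sq_nonneg |x3|,
        sq_nonneg |x4|, sq_nonneg |x5|]
  have hcmX : |c * (|s| ^ 2 - |x1| ^ 2 + |x2| ^ 2 - |x3| ^ 2 + |x4| ^ 2 - |x5| ^ 2)| ≤
      |c| * (|s| ^ 2 + |x1| ^ 2 + |x2| ^ 2 + |x3| ^ 2 + |x4| ^ 2 + |x5| ^ 2) := by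
    rw [abs_mul]; exact mul_le_mul_of_nonneg_left hXabs hc0
  have hct1 : c * (|s| ^ 2 - |x1| ^ 2 + |x2| ^ 2 - |x3| ^ 2 + |x4| ^ 2 - |x5| ^ 2) ≥
      -(|c| * (|s| ^ 2 + |x1| ^ 2 + |x2| ^ 2 + |x3| ^ 2 + |x4| ^ 2 + |x5| ^ 2)) := by
    have h := neg_abs_le (c * (|s| ^ 2 - |x1| ^ 2 + |x2| ^ 2 - |x3| ^ 2 + |x4| ^ 2 - |x5| ^ 2))
    linarith only [h, hcmX]
  have hct2 : c * (|s| ^ 2 - |x1| ^ 2 + |x2| ^ 2 - |x3| ^ 2 + |x4| ^ 2 - |x5| ^ 2) ≤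
      |c| * (|s| ^ 2 + |x1| ^ 2 + |x2| ^ 2 + |x3| ^ 2 + |x4| ^ 2 + |x5| ^ 2) := by
    have h := le_abs_self (c * (|s| ^ 2 - |x1| ^ 2 + |x2| ^ 2 - |x3| ^ 2 + |x4| ^ 2 - |x5| ^ 2))
    linarith only [h, hcmX]
  -- triangle inequalities
  have hsplit : s = (x3 + x5) + (x1 - x2 - x4) := by rw [hs]; ring
  have he : |x1 - x2 - x4| ≤ |x1| + |x2| + |x4| := by
    calc |x1 - x2 - x4| ≤ |x1 - x2| + |x4| := abs_sub _ _
      _ ≤ |x1| + |x2| + |x4| := by linarith only [abs_sub x1 x2]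
  have hSle : |s| ≤ |x3 + x5| + (|x1| + |x2| + |x4|) := by
    calc |s| = |(x3 + x5) + (x1 - x2 - x4)| := by rw [hsplit]
      _ ≤ |x3 + x5| + |x1 - x2 - x4| := abs_add_le _ _
      _ ≤ |x3 + x5| + (|x1| + |x2| + |x4|) := by linarith only [he]
  have hSge : |x3 + x5| - (|x1| + |x2| + |x4|) ≤ |s| := by
    have heq : |x3 + x5| = |s - (x1 - x2 - x4)| := by rw [hsplit]; ring_nf
    have h' : |x3 + x5| ≤ |s| + (|x1| + |x2| + |x4|) := by
      calc |x3 + x5| = |s - (x1 - x2 - x4)| := heq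
        _ ≤ |s| + |x1 - x2 - x4| := abs_sub _ _
        _ ≤ |s| + (|x1| + |x2| + |x4|) := by linarith only [he]
    linarith only [h']
  -- useful small bounds
  have hA4 : |x1| ^ 4 ≤ (|x3| / 14) ^ 4 := pow_le_pow_left₀ hA0 (by linarith) 4
  have hB4 : |x2| ^ 4 ≤ (|x3| / 14) ^ 4 := pow_le_pow_left₀ hB0 (by linarith) 4
  have hD4 : |x4| ^ 4 ≤ (|x3| / 14) ^ 4 := pow_le_pow_left₀ hD0 (by linarith) 4
  have hA2 : |x1| ^ 2 ≤ (|x3| / 14) ^ 2 := pow_le_pow_left₀ hA0 (by linarith) 2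
  have hB2 : |x2| ^ 2 ≤ (|x3| / 14) ^ 2 := pow_le_pow_left₀ hB0 (by linarith) 2
  have hD2 : |x4| ^ 2 ≤ (|x3| / 14) ^ 2 := pow_le_pow_left₀ hD0 (by linarith) 2
  have hb2 : |x5| ^ 2 ≤ |x3| ^ 2 := pow_le_pow_left₀ hb0.le hba 2
  have h142 : (|x3| / 14) ^ 2 = (1/196) * |x3| ^ 2 := by ring
  have h144 : (|x3| / 14) ^ 4 = (1/38416) * |x3| ^ 4 := by ring
  have hab4 : |x3| ^ 4 ≤ 16 * (|x3| ^ 3 * |x5|) := by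
    have h := mul_le_mul_of_nonneg_left hab (pow_nonneg ha0.le 3)
    calc |x3| ^ 4 = |x3| ^ 3 * |x3| := by ring
      _ ≤ |x3| ^ 3 * (16 * |x5|) := h
      _ = 16 * (|x3| ^ 3 * |x5|) := by ring
  have ha34 : |x3| ^ 3 * 16 ≤ |x3| ^ 4 := by
    have h := mul_le_mul_of_nonneg_left hN.le (pow_nonneg ha0.le 3)
    calc |x3| ^ 3 * 16 ≤ |x3| ^ 3 * |x3| := h
      _ = |x3| ^ 4 := by ring
  have ha40 : (0:ℝ) ≤ |x3| ^ 4 := by positivity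
  rcases le_or_gt 0 (x3 * x5) with hsgn | hsgn
  · -- same sign : Phi5 is large positive
    have hmul : x3 * x5 = |x3| * |x5| := by
      rw [← abs_mul]; exact (abs_of_nonneg hsgn).symm
    have ht : |x3 + x5| = |x3| + |x5| := by
      apply abs_eq_of_sq_eq (by positivity)
      linear_combination 2 * hmul - sq_abs x3 - sq_abs x5
    have hS_lb : |x3| + (11/14) * |x5| ≤ |s| := by
      rw [ht] at hSge; linarith only [hSge, h1, h2, h4]
    have hS_ub : |s| ≤ (31/14) * |x3| := by
      rw [ht] at hSle; linarith only [hSle, h1, h2, h4, hba]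
    have hS4 : (|x3| + (11/14) * |x5|) ^ 4 ≤ |s| ^ 4 :=
      pow_le_pow_left₀ (by positivity) hS_lb 4
    have hS2 : |s| ^ 2 ≤ ((31/14) * |x3|) ^ 2 := pow_le_pow_left₀ hS0 hS_ub 2
    have hS2' : ((31/14) * |x3|) ^ 2 = (961/196) * |x3| ^ 2 := by ring
    have hb3 : |x5| ^ 3 ≤ |x3| ^ 3 := pow_le_pow_left₀ hb0.le hba 3
    have hb4 : |x5| ^ 4 ≤ |x3| ^ 3 * |x5| := by
      have h := mul_le_mul_of_nonneg_right hb3 hb0.le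
      calc |x5| ^ 4 = |x5| ^ 3 * |x5| := by ring
        _ ≤ |x3| ^ 3 * |x5| := h
    have hq : |x3| ^ 4 + |x5| ^ 4 + (15/112) * |x3| ^ 4 ≤
        (|x3| + (11/14) * |x5|) ^ 4 := quart_pos _ _ ha0.le hb0.le hb4 hab4
    have hsum : |s| ^ 2 + |x1| ^ 2 + |x2| ^ 2 + |x3| ^ 2 + |x4| ^ 2 + |x5| ^ 2 ≤
        (1356/196) * |x3| ^ 2 := by
      linarith only [hS2, hS2', hA2, hB2, hD2, hb2, h142]
    have hc2 : |c| * (|s| ^ 2 + |x1| ^ 2 + |x2| ^ 2 + |x3| ^ 2 + |x4| ^ 2 + |x5| ^ 2) ≤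
        (|x3| / 16) * ((1356/196) * |x3| ^ 2) :=
      mul_le_mul (by linarith) hsum (by positivity) (by positivity)
    have hc3 : (|x3| / 16) * ((1356/196) * |x3| ^ 2) ≤ (1356/50176) * |x3| ^ 4 := by
      have hr : (|x3| / 16) * ((1356/196) * |x3| ^ 2) = (1356/3136) * |x3| ^ 3 := by ring
      rw [hr]; linarith only [ha34]
    have hB4' : (0:ℝ) ≤ |x2| ^ 4 := by positivity
    have hD4' : (0:ℝ) ≤ |x4| ^ 4 := by positivity
    have hmain : Phi5 c x1 x2 x3 x4 x5 ≥ (1/64) * |x3| ^ 4 := by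
      rw [hPhi]
      linarith only [hct1, hS4, hq, hA4, h144, hc2, hc3, hB4', hD4', ha40]
    calc (1/64) * |x3| ^ 4 ≤ Phi5 c x1 x2 x3 x4 x5 := hmain
      _ ≤ |Phi5 c x1 x2 x3 x4 x5| := le_abs_self _
  · -- opposite signs : Phi5 is large negative
    have hmul : x3 * x5 = -(|x3| * |x5|) := by
      rw [← abs_mul]
      have := abs_of_nonpos hsgn.le
      linarith only [this]
    have ht : |x3 + x5| = |x3| - |x5| := by
      apply abs_eq_of_sq_eq (by linarith)
      linear_combination 2 * hmul - sq_abs x3 - sq_abs x5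
    have hS_ub : |s| ≤ |x3| - (11/14) * |x5| := by
      rw [ht] at hSle; linarith only [hSle, h1, h2, h4]
    have hS4 : |s| ^ 4 ≤ (|x3| - (11/14) * |x5|) ^ 4 := pow_le_pow_left₀ hS0 hS_ub 4
    have hS2 : |s| ^ 2 ≤ |x3| ^ 2 := pow_le_pow_left₀ hS0 (by linarith) 2
    have hq : (|x3| - (11/14) * |x5|) ^ 4 ≤ |x3| ^ 4 - (11/14) * (|x3| ^ 3 * |x5|) :=
      quart_neg _ _ hb0.le hba
    have hsum : |s| ^ 2 + |x1| ^ 2 + |x2| ^ 2 + |x3| ^ 2 + |x4| ^ 2 + |x5| ^ 2 ≤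
        (591/196) * |x3| ^ 2 := by
      linarith only [hS2, hA2, hB2, hD2, hb2, h142]
    have hc2 : |c| * (|s| ^ 2 + |x1| ^ 2 + |x2| ^ 2 + |x3| ^ 2 + |x4| ^ 2 + |x5| ^ 2) ≤
        (|x3| / 16) * ((591/196) * |x3| ^ 2) :=
      mul_le_mul (by linarith) hsum (by positivity) (by positivity)
    have hc3 : (|x3| / 16) * ((591/196) * |x3| ^ 2) ≤ (591/50176) * |x3| ^ 4 := by
      have hr : (|x3| / 16) * ((591/196) * |x3| ^ 2) = (591/3136) * |x3| ^ 3 := by ring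
      rw [hr]; linarith only [ha34]
    have hA4' : (0:ℝ) ≤ |x1| ^ 4 := by positivity
    have hb4'' : (0:ℝ) ≤ |x5| ^ 4 := by positivity
    have hmain : -(Phi5 c x1 x2 x3 x4 x5) ≥ (1/64) * |x3| ^ 4 := by
      rw [hPhi]
      linarith only [hct2, hS4, hq, hB4, hD4, h144, hc2, hc3, hab4, hA4', hb4'', ha40]
    calc (1/64) * |x3| ^ 4 ≤ -(Phi5 c x1 x2 x3 x4 x5) := hmain
      _ ≤ |Phi5 c x1 x2 x3 x4 x5| := neg_le_abs _

theorem stmt_12 (c : ℝ) (k1 k2 k3 k4 k5 : ℤ)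
    (h1 : 14 * max (max |k1| |k2|) |k4| < min |k3| |k5|)
    (h2 : |(k3 : ℝ)| / 16 ≤ |(k5 : ℝ)|)
    (h3 : |(k5 : ℝ)| ≤ 16 * |(k3 : ℝ)|)
    (hc : max (max (max (max |(k1 : ℝ)| |(k2 : ℝ)|) |(k3 : ℝ)|) |(k4 : ℝ)|) |(k5 : ℝ)| >
      16 * max 1 |c|) :
    |Phi5 c (k1 : ℝ) (k2 : ℝ) (k3 : ℝ) (k4 : ℝ) (k5 : ℝ)| ≥
      (1 / 64) * (max |(k3 : ℝ)| |(k5 : ℝ)|) ^ 4 := by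
  have h1R : (14:ℝ) * max (max |(k1:ℝ)| |(k2:ℝ)|) |(k4:ℝ)| < min |(k3:ℝ)| |(k5:ℝ)| := by
    exact_mod_cast h1
  have hm1 : |(k1:ℝ)| ≤ max (max |(k1:ℝ)| |(k2:ℝ)|) |(k4:ℝ)| :=
    le_max_of_le_left (le_max_left _ _)
  have hm2 : |(k2:ℝ)| ≤ max (max |(k1:ℝ)| |(k2:ℝ)|) |(k4:ℝ)| :=
    le_max_of_le_left (le_max_right _ _)
  have hm4 : |(k4:ℝ)| ≤ max (max |(k1:ℝ)| |(k2:ℝ)|) |(k4:ℝ)| := le_max_right _ _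
  have hmin3 : min |(k3:ℝ)| |(k5:ℝ)| ≤ |(k3:ℝ)| := min_le_left _ _
  have hmin5 : min |(k3:ℝ)| |(k5:ℝ)| ≤ |(k5:ℝ)| := min_le_right _ _
  have h13 : 14 * |(k1:ℝ)| < |(k3:ℝ)| := by linarith
  have h15 : 14 * |(k1:ℝ)| < |(k5:ℝ)| := by linarith
  have h23 : 14 * |(k2:ℝ)| < |(k3:ℝ)| := by linarith
  have h25 : 14 * |(k2:ℝ)| < |(k5:ℝ)| := by linarith
  have h43 : 14 * |(k4:ℝ)| < |(k3:ℝ)| := by linarith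
  have h45 : 14 * |(k4:ℝ)| < |(k5:ℝ)| := by linarith
  have hNle : max (max (max (max |(k1:ℝ)| |(k2:ℝ)|) |(k3:ℝ)|) |(k4:ℝ)|) |(k5:ℝ)| ≤
      max |(k3:ℝ)| |(k5:ℝ)| := by
    have e3 : |(k3:ℝ)| ≤ max |(k3:ℝ)| |(k5:ℝ)| := le_max_left _ _
    have e5 : |(k5:ℝ)| ≤ max |(k3:ℝ)| |(k5:ℝ)| := le_max_right _ _
    have e1 : |(k1:ℝ)| ≤ max |(k3:ℝ)| |(k5:ℝ)| := by
      have := abs_nonneg (k1:ℝ); linarith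
    have e2 : |(k2:ℝ)| ≤ max |(k3:ℝ)| |(k5:ℝ)| := by
      have := abs_nonneg (k2:ℝ); linarith
    have e4 : |(k4:ℝ)| ≤ max |(k3:ℝ)| |(k5:ℝ)| := by
      have := abs_nonneg (k4:ℝ); linarith
    exact max_le (max_le (max_le (max_le e1 e2) e3) e4) e5
  have hNgt : 16 * max 1 |c| < max |(k3:ℝ)| |(k5:ℝ)| := lt_of_lt_of_le hc hNle
  have hone : (1:ℝ) ≤ max 1 |c| := le_max_left _ _
  have hcabs : |c| ≤ max 1 |c| := le_max_right _ _
  have hN16 : 16 < max |(k3:ℝ)| |(k5:ℝ)| := by linarith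
  have hNc : 16 * |c| < max |(k3:ℝ)| |(k5:ℝ)| := by linarith
  rcases le_total |(k5:ℝ)| |(k3:ℝ)| with hle | hle
  · rw [max_eq_left hle] at hN16 hNc ⊢
    exact master c _ _ _ _ _ h15 h25 h45 hle (by linarith) hN16 hNc
  · rw [max_eq_right hle] at hN16 hNc ⊢
    have hswap : Phi5 c (k1:ℝ) (k2:ℝ) (k3:ℝ) (k4:ℝ) (k5:ℝ) =
        Phi5 c (k1:ℝ) (k2:ℝ) (k5:ℝ) (k4:ℝ) (k3:ℝ) := by
      simp only [Phi5, phi]; ring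
    rw [hswap]
    exact master c _ _ _ _ _ h13 h23 h43 hle h3 hN16 hNc
end

section
/- For every real number c and every constant A > 0 there exist integers k1, k2, k3, k4, k5 such that k1 - k2 + k3 - k4 ≠ 0, |k5| > A·max(|k1|,|k2|,|k3|,|k4|), |k5| > A·max(1,|c|), and |Φ5_c(k1,...,k5)| ≤ A^{-1}·|k1-k2+k3-k4|·|k5|^3, where Φ5_c(k1,...,k5) = φ_c(k1-k2+k3-k4+k5) - φ_c(k1) + φ_c(k2) - φ_c(k3) + φ_c(k4) - φ_c(k5) and φ_c(k) = k^4 + c·k^2. -/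
theorem stmt_13 (c A : ℝ) (hA : 0 < A) :
    ∃ k1 k2 k3 k4 k5 : ℤ,
      k1 - k2 + k3 - k4 ≠ 0 ∧
      |(k5 : ℝ)| > A * max (max (max |(k1 : ℝ)| |(k2 : ℝ)|) |(k3 : ℝ)|) |(k4 : ℝ)| ∧
      |(k5 : ℝ)| > A * max 1 |c| ∧
      |Phi5 c (k1 : ℝ) (k2 : ℝ) (k3 : ℝ) (k4 : ℝ) (k5 : ℝ)| ≤
        A⁻¹ * |(k1 : ℝ) - (k2 : ℝ) + (k3 : ℝ) - (k4 : ℝ)| * |(k5 : ℝ)| ^ 3 := by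
  obtain ⟨n, hn⟩ := exists_nat_ge (36 * (A + 1) * (|c| + 1))
  set N : ℝ := ((n : ℕ) : ℝ) with hNdef
  have hc0 : (0 : ℝ) ≤ |c| := abs_nonneg c
  have h1 : (1 : ℝ) ≤ N := by nlinarith
  have h0 : (0 : ℝ) ≤ N := by linarith
  have h38 : N ^ 3 ≤ N ^ 8 := pow_le_pow_right₀ h1 (by norm_num)
  have hn3 : (0 : ℝ) ≤ N ^ 3 := pow_nonneg h0 3
  have habs2 : |N ^ 3 - 1| = N ^ 3 - 1 := by
    rw [abs_of_nonneg]; nlinarith [pow_le_pow_right₀ h1 (by norm_num : 1 ≤ 3)]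
  have habs3 : |N ^ 8 + N ^ 3| = N ^ 8 + N ^ 3 := by rw [abs_of_nonneg]; positivity
  have habs4 : |N ^ 8| = N ^ 8 := by rw [abs_of_nonneg]; positivity
  have habs5 : |N ^ 9| = N ^ 9 := by rw [abs_of_nonneg]; positivity
  refine ⟨0, (n : ℤ) ^ 3 - 1, (n : ℤ) ^ 8 + (n : ℤ) ^ 3, (n : ℤ) ^ 8, (n : ℤ) ^ 9, ?_, ?_, ?_, ?_⟩
  · have : (0 : ℤ) - ((n : ℤ) ^ 3 - 1) + ((n : ℤ) ^ 8 + (n : ℤ) ^ 3) - (n : ℤ) ^ 8 = 1 := by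
      ring
    omega
  · push_cast
    rw [habs2, habs3, habs4, habs5, abs_zero]
    have hmax : max (max (max 0 (N ^ 3 - 1)) (N ^ 8 + N ^ 3)) (N ^ 8) ≤ N ^ 8 + N ^ 3 := by
      simp only [max_le_iff]
      refine ⟨⟨⟨by positivity, by linarith⟩, le_refl _⟩, by linarith⟩
    have hstep : A * (N ^ 8 + N ^ 3) < N ^ 9 := by
      have h2A : 2 * A + 1 ≤ N := by nlinarith
      have h8pos : (0 : ℝ) < N ^ 8 := pow_pos (lt_of_lt_of_le one_pos h1) 8
      have : A * (N ^ 8 + N ^ 3) ≤ A * (2 * N ^ 8) := by nlinarith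
      have h2 : A * (2 * N ^ 8) < N * N ^ 8 := by nlinarith
      have h3 : N * N ^ 8 = N ^ 9 := by ring
      linarith
    exact lt_of_le_of_lt (mul_le_mul_of_nonneg_left hmax (le_of_lt hA)) hstep
  · push_cast
    rw [habs5]
    have hmax : max 1 |c| ≤ 1 + |c| := max_le (by linarith) (by linarith)
    have hAN : A * (1 + |c|) < N := by nlinarith
    have hN9 : N ≤ N ^ 9 := le_self_pow₀ h1 (by norm_num)
    calc A * max 1 |c| ≤ A * (1 + |c|) := mul_le_mul_of_nonneg_left hmax (le_of_lt hA)
      _ < N := hAN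
      _ ≤ N ^ 9 := hN9
  · push_cast
    have hPhi : Phi5 c 0 (N ^ 3 - 1) (N ^ 8 + N ^ 3) (N ^ 8) (N ^ 9) =
        (-6 * N ^ 22 + 6 * N ^ 18 - 4 * N ^ 17 + 6 * N ^ 6 - 4 * N ^ 3 + 2)
        + c * (-2 * N ^ 11 + 2 * N ^ 9 - 2 * N ^ 3 + 2) := by
      unfold Phi5 phi; ring
    have hs : (0 : ℝ) - (N ^ 3 - 1) + (N ^ 8 + N ^ 3) - N ^ 8 = 1 := by ring
    rw [hPhi, hs, abs_one, habs5]
    have e22 : ∀ k : ℕ, k ≤ 22 → N ^ k ≤ N ^ 22 := fun k hk => pow_le_pow_right₀ h1 hk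
    have e11 : ∀ k : ℕ, k ≤ 11 → N ^ k ≤ N ^ 11 := fun k hk => pow_le_pow_right₀ h1 hk
    have h122 : (1 : ℝ) ≤ N ^ 22 := by simpa using e22 0 (by norm_num)
    have h111 : (1 : ℝ) ≤ N ^ 11 := by simpa using e11 0 (by norm_num)
    have hP : |(-6 * N ^ 22 + 6 * N ^ 18 - 4 * N ^ 17 + 6 * N ^ 6 - 4 * N ^ 3 + 2)| ≤
        28 * N ^ 22 := by
      rw [abs_le]
      constructor
      · linarith [e22 18 (by norm_num : (18:ℕ) ≤ 22), e22 17 (by norm_num : (17:ℕ) ≤ 22),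
          e22 6 (by norm_num : (6:ℕ) ≤ 22), e22 3 (by norm_num : (3:ℕ) ≤ 22),
          pow_nonneg h0 18, pow_nonneg h0 17, pow_nonneg h0 6, pow_nonneg h0 3]
      · linarith [e22 18 (by norm_num : (18:ℕ) ≤ 22), e22 17 (by norm_num : (17:ℕ) ≤ 22),
          e22 6 (by norm_num : (6:ℕ) ≤ 22), e22 3 (by norm_num : (3:ℕ) ≤ 22),
          pow_nonneg h0 18, pow_nonneg h0 17, pow_nonneg h0 6, pow_nonneg h0 3]
    have hQ : |(-2 * N ^ 11 + 2 * N ^ 9 - 2 * N ^ 3 + 2)| ≤ 8 * N ^ 11 := by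
      rw [abs_le]
      constructor
      · linarith [e11 9 (by norm_num : (9:ℕ) ≤ 11), e11 3 (by norm_num : (3:ℕ) ≤ 11),
          pow_nonneg h0 9, pow_nonneg h0 3]
      · linarith [e11 9 (by norm_num : (9:ℕ) ≤ 11), e11 3 (by norm_num : (3:ℕ) ≤ 11),
          pow_nonneg h0 9, pow_nonneg h0 3]
    have hcN : |c| ≤ N := by nlinarith
    have step1 : |(-6 * N ^ 22 + 6 * N ^ 18 - 4 * N ^ 17 + 6 * N ^ 6 - 4 * N ^ 3 + 2)
        + c * (-2 * N ^ 11 + 2 * N ^ 9 - 2 * N ^ 3 + 2)| ≤ 36 * N ^ 22 := by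
      calc |(-6 * N ^ 22 + 6 * N ^ 18 - 4 * N ^ 17 + 6 * N ^ 6 - 4 * N ^ 3 + 2)
          + c * (-2 * N ^ 11 + 2 * N ^ 9 - 2 * N ^ 3 + 2)|
          ≤ |(-6 * N ^ 22 + 6 * N ^ 18 - 4 * N ^ 17 + 6 * N ^ 6 - 4 * N ^ 3 + 2)|
            + |c| * |(-2 * N ^ 11 + 2 * N ^ 9 - 2 * N ^ 3 + 2)| := by
            calc |(-6 * N ^ 22 + 6 * N ^ 18 - 4 * N ^ 17 + 6 * N ^ 6 - 4 * N ^ 3 + 2)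
                + c * (-2 * N ^ 11 + 2 * N ^ 9 - 2 * N ^ 3 + 2)|
                ≤ |(-6 * N ^ 22 + 6 * N ^ 18 - 4 * N ^ 17 + 6 * N ^ 6 - 4 * N ^ 3 + 2)|
                  + |c * (-2 * N ^ 11 + 2 * N ^ 9 - 2 * N ^ 3 + 2)| := abs_add_le _ _
              _ = _ := by rw [abs_mul]
        _ ≤ 28 * N ^ 22 + N * (8 * N ^ 11) := by
            have := mul_le_mul hcN hQ (abs_nonneg _) h0
            linarith
        _ ≤ 36 * N ^ 22 := by
            have h12 : N ^ 12 ≤ N ^ 22 := pow_le_pow_right₀ h1 (by norm_num)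
            have h12' : N * (8 * N ^ 11) = 8 * N ^ 12 := by ring
            linarith
    have hfin : 36 * N ^ 22 ≤ A⁻¹ * 1 * (N ^ 9) ^ 3 := by
      have h36A : 36 * A ≤ N := by nlinarith
      have hkey : A * (36 * N ^ 22) ≤ N ^ 27 := by
        have h23 : N ^ 23 ≤ N ^ 27 := pow_le_pow_right₀ h1 (by norm_num)
        have hm : 36 * A * N ^ 22 ≤ N * N ^ 22 :=
          mul_le_mul_of_nonneg_right h36A (pow_nonneg h0 22)
        have he : N * N ^ 22 = N ^ 23 := by ring
        linarith
      have hAinv : (0 : ℝ) < A⁻¹ := inv_pos.mpr hA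
      calc 36 * N ^ 22 = A⁻¹ * (A * (36 * N ^ 22)) := by field_simp
        _ ≤ A⁻¹ * N ^ 27 := mul_le_mul_of_nonneg_left hkey (le_of_lt hAinv)
        _ = A⁻¹ * 1 * (N ^ 9) ^ 3 := by ring
    linarith
end

section
/- Let s ≥ 1 be a real number. There exists a constant C > 0 such that for all functions f1, f2, f3 : ℤ → [0,∞) with ⟨k⟩^s fj(k) square-summable, one has ( Σ_{k∈ℤ} ⟨k⟩^{2(s-2)} ( Σ_{k1-k2+k3=k} ⟨max(|k1|,|k2|,|k3|)⟩^2 f1(k1) f2(k2) f3(k3) )^2 )^{1/2} ≤ C · ∏_{j=1}^3 ‖⟨·⟩^s fj‖_{l^2}, where ⟨k⟩ = (1+k^2)^{1/2}. -/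
open scoped ENNReal NNReal

/-- The Japanese bracket `⟨k⟩ = (1+k^2)^{1/2}`. -/
noncomputable def jb (k : ℤ) : ℝ := Real.sqrt (1 + (k : ℝ) ^ 2)

/-- The `l^2_s` norm `‖⟨·⟩^s f‖_{l^2}`, valued in `ℝ≥0∞`. -/
noncomputable def sobNorm (s : ℝ) (f : ℤ → ℝ≥0) : ℝ≥0∞ :=
  (∑' k : ℤ, ENNReal.ofReal (jb k ^ (2 * s)) * (f k : ℝ≥0∞) ^ 2) ^ ((1 : ℝ) / 2)

open Function MeasureTheory

/-!
Write `a = ⟨k⟩`, `aⱼ = ⟨kⱼ⟩` and `μ` for the bracket of the largest frequency. On the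
hyperplane `k₁ - k₂ + k₃ = k` the triangle inequality for `⟨·⟩` gives
`μ² ≤ a (a₁ + a₂ + a₃) + (a₁a₂ + a₁a₃ + a₂a₃)` and `a ≤ a₁ + a₂ + a₃ ≤ 3 a₁a₂a₃`, hence
`a^(s-2) μ² ≤ 3^(s-1) (a₁a₂a₃)^(s-1) (a₁ + a₂ + a₃ + a⁻¹ (a₁a₂ + a₁a₃ + a₂a₃))`.
With `gⱼ = ⟨·⟩^s fⱼ ∈ l²` and `hⱼ = ⟨·⟩^(s-1) fⱼ = ⟨·⟩⁻¹ gⱼ ∈ l¹` (Cauchy–Schwarz, as `⟨·⟩⁻¹ ∈ l²`),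
the sum splits into six trilinear terms. Those with one `gⱼ` and two `hⱼ` are bounded in `l²` by
Young's inequality; those with two `gⱼ` carry the factor `a⁻¹ ∈ l²` and are bounded uniformly in `k`
by Cauchy–Schwarz.
-/

namespace ENNReal

theorem tsum_mul_tsum {α β : Type*} (u : α → ℝ≥0∞) (v : β → ℝ≥0∞) :
    (∑' i, u i) * ∑' j, v j = ∑' q : α × β, u q.1 * v q.2 := by
  rw [ENNReal.tsum_prod', ← ENNReal.tsum_mul_right]
  simp_rw [← ENNReal.tsum_mul_left]

variable {ι : Type*}

theorem sq_sum_le_card_mul_sum_sq (s : Finset ι) (f : ι → ℝ≥0∞) :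
    (∑ i ∈ s, f i) ^ 2 ≤ s.card * ∑ i ∈ s, f i ^ 2 := by
  simpa [ENNReal.rpow_two, show (2 : ℝ) - 1 = 1 by norm_num] using
    ENNReal.rpow_sum_le_const_mul_sum_rpow s f (p := 2) one_le_two

theorem tsum_sq_sum_le {κ : Type*} (s : Finset κ) (U : κ → ι → ℝ≥0∞) {B : ℝ≥0∞}
    (hU : ∀ m ∈ s, ∑' k, U m k ^ 2 ≤ B) : ∑' k, (∑ m ∈ s, U m k) ^ 2 ≤ s.card ^ 2 * B :=
  calc ∑' k, (∑ m ∈ s, U m k) ^ 2 ≤ ∑' k, s.card * ∑ m ∈ s, U m k ^ 2 :=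
        ENNReal.tsum_le_tsum fun k => sq_sum_le_card_mul_sum_sq s _
    _ = s.card * ∑ m ∈ s, ∑' k, U m k ^ 2 := by
        rw [ENNReal.tsum_mul_left, Summable.tsum_finsetSum fun _ _ => ENNReal.summable]
    _ ≤ s.card * (s.card * B) := by
        gcongr
        simpa using Finset.sum_le_card_nsmul s _ B hU
    _ = _ := by ring

theorem tsum_mul_sq_le (u v : ι → ℝ≥0∞) :
    (∑' i, u i * v i) ^ 2 ≤ (∑' i, u i ^ 2) * ∑' i, v i ^ 2 := by
  let _ : MeasurableSpace ι := ⊤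
  have holder := ENNReal.lintegral_mul_le_Lp_mul_Lq Measure.count Real.HolderConjugate.two_two
    measurable_from_top.aemeasurable measurable_from_top.aemeasurable (f := u) (g := v)
  simp only [lintegral_count, Pi.mul_apply, ENNReal.rpow_two] at holder
  calc _ ≤ ((∑' i, u i ^ 2) ^ (1 / 2 : ℝ) * (∑' i, v i ^ 2) ^ (1 / 2 : ℝ)) ^ 2 := by gcongr
    _ = _ := by
      rw [mul_pow, ← ENNReal.rpow_natCast, ← ENNReal.rpow_mul, ← ENNReal.rpow_natCast,
        ← ENNReal.rpow_mul]
      norm_num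

theorem tsum_mul_sq_le_tsum_mul_tsum_mul_sq (w φ : ι → ℝ≥0∞) :
    (∑' i, w i * φ i) ^ 2 ≤ (∑' i, w i) * ∑' i, w i * φ i ^ 2 := by
  have hsqrt (x : ℝ≥0∞) : (x ^ (2⁻¹ : ℝ)) ^ 2 = x := by
    simpa using ENNReal.rpow_inv_natCast_pow two_ne_zero x
  have hsplit (i : ι) : w i * φ i = w i ^ (2⁻¹ : ℝ) * (w i ^ (2⁻¹ : ℝ) * φ i) := by
    rw [← mul_assoc, ← sq, hsqrt]
  simpa only [← hsplit, hsqrt, mul_pow] using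
    tsum_mul_sq_le (fun i => w i ^ (2⁻¹ : ℝ)) (fun i => w i ^ (2⁻¹ : ℝ) * φ i)

theorem tsum_sq_tsum_mul_comp_le {α β κ : Type*} (w : κ → ℝ≥0∞) (φ : β → ℝ≥0∞)
    (σ : α → κ → β) (hσ : ∀ q, Injective (σ · q)) :
    ∑' k, (∑' q, w q * φ (σ k q)) ^ 2 ≤ (∑' q, w q) ^ 2 * ∑' x, φ x ^ 2 :=
  calc ∑' k, (∑' q, w q * φ (σ k q)) ^ 2
      ≤ ∑' k, (∑' q, w q) * ∑' q, w q * φ (σ k q) ^ 2 :=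
        ENNReal.tsum_le_tsum fun k => tsum_mul_sq_le_tsum_mul_tsum_mul_sq _ _
    _ = (∑' q, w q) * ∑' q, w q * ∑' k, φ (σ k q) ^ 2 := by
        rw [ENNReal.tsum_mul_left, ENNReal.tsum_comm]
        simp_rw [ENNReal.tsum_mul_left]
    _ ≤ (∑' q, w q) * ∑' q, w q * ∑' x, φ x ^ 2 := by
        gcongr with q
        exact ENNReal.tsum_comp_le_tsum_of_injective (hσ q) (fun x => φ x ^ 2)
    _ = _ := by rw [ENNReal.tsum_mul_right, sq, mul_assoc]

theorem sq_tsum_mul_tsum_mul_comp_le {α β γ : Type*} (w : α → ℝ≥0∞) (u : β → ℝ≥0∞)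
    (v : γ → ℝ≥0∞) (τ : α → β → γ) (hτ : ∀ a, Injective (τ a)) :
    (∑' a, w a * ∑' b, u b * v (τ a b)) ^ 2
      ≤ (∑' a, w a) ^ 2 * ((∑' b, u b ^ 2) * ∑' c, v c ^ 2) := by
  have hinner (a : α) : (∑' b, u b * v (τ a b)) ^ 2 ≤ (∑' b, u b ^ 2) * ∑' c, v c ^ 2 := by
    refine (tsum_mul_sq_le _ _).trans ?_
    gcongr
    exact ENNReal.tsum_comp_le_tsum_of_injective (hτ a) (fun c => v c ^ 2)
  calc _ ≤ (∑' a, w a) * ∑' a, w a * (∑' b, u b * v (τ a b)) ^ 2 :=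
        tsum_mul_sq_le_tsum_mul_tsum_mul_sq _ _
    _ ≤ (∑' a, w a) * ∑' a, w a * ((∑' b, u b ^ 2) * ∑' c, v c ^ 2) := by
        gcongr with a
        exact hinner a
    _ = _ := by rw [ENNReal.tsum_mul_right, sq, mul_assoc]

end ENNReal

noncomputable def trilinear (F₁ F₂ F₃ : ℤ → ℝ≥0∞) (k : ℤ) : ℝ≥0∞ :=
  ∑' p : ℤ × ℤ, F₁ p.1 * F₂ p.2 * F₃ (k - p.1 + p.2)

section Trilinear

variable (F₁ F₂ F₃ : ℤ → ℝ≥0∞)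

theorem trilinear_le_rotate (k : ℤ) :
    trilinear F₁ F₂ F₃ k ≤ ∑' q : ℤ × ℤ, F₂ q.1 * F₃ q.2 * F₁ (k + q.1 - q.2) := by
  have he : Injective fun p : ℤ × ℤ => (p.2, k - p.1 + p.2) := fun _ _ h => by
    simp only [Prod.mk.injEq] at h; ext <;> omega
  refine (tsum_congr fun p => ?_).trans_le (ENNReal.tsum_comp_le_tsum_of_injective he
    fun q => F₂ q.1 * F₃ q.2 * F₁ (k + q.1 - q.2))
  simp only [show k + p.2 - (k - p.1 + p.2) = p.1 by ring]
  ring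

theorem trilinear_le_rotate' (k : ℤ) :
    trilinear F₁ F₂ F₃ k ≤ ∑' q : ℤ × ℤ, F₃ q.1 * F₁ q.2 * F₂ (q.1 + q.2 - k) := by
  have he : Injective fun p : ℤ × ℤ => (k - p.1 + p.2, p.1) := fun _ _ h => by
    simp only [Prod.mk.injEq] at h; ext <;> omega
  refine (tsum_congr fun p => ?_).trans_le (ENNReal.tsum_comp_le_tsum_of_injective he
    fun q => F₃ q.1 * F₁ q.2 * F₂ (q.1 + q.2 - k))
  simp only [show k - p.1 + p.2 + p.1 - k = p.2 by ring]
  ring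

theorem tsum_trilinear_sq_le_left :
    ∑' k, trilinear F₁ F₂ F₃ k ^ 2 ≤ ((∑' i, F₂ i) * ∑' j, F₃ j) ^ 2 * ∑' x, F₁ x ^ 2 := by
  refine (ENNReal.tsum_le_tsum fun k =>
    pow_le_pow_left' (trilinear_le_rotate F₁ F₂ F₃ k) 2).trans ?_
  rw [ENNReal.tsum_mul_tsum]
  exact ENNReal.tsum_sq_tsum_mul_comp_le _ F₁ (fun k (q : ℤ × ℤ) => k + q.1 - q.2)
    fun _ _ _ h => by simp only at h; omega

theorem tsum_trilinear_sq_le_middle :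
    ∑' k, trilinear F₁ F₂ F₃ k ^ 2 ≤ ((∑' i, F₃ i) * ∑' j, F₁ j) ^ 2 * ∑' x, F₂ x ^ 2 := by
  refine (ENNReal.tsum_le_tsum fun k =>
    pow_le_pow_left' (trilinear_le_rotate' F₁ F₂ F₃ k) 2).trans ?_
  rw [ENNReal.tsum_mul_tsum]
  exact ENNReal.tsum_sq_tsum_mul_comp_le _ F₂ (fun k (q : ℤ × ℤ) => q.1 + q.2 - k)
    fun _ _ _ h => by simp only at h; omega

theorem tsum_trilinear_sq_le_right :
    ∑' k, trilinear F₁ F₂ F₃ k ^ 2 ≤ ((∑' i, F₁ i) * ∑' j, F₂ j) ^ 2 * ∑' x, F₃ x ^ 2 := by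
  rw [ENNReal.tsum_mul_tsum]
  exact ENNReal.tsum_sq_tsum_mul_comp_le _ F₃ (fun k (q : ℤ × ℤ) => k - q.1 + q.2)
    fun _ _ _ h => by simp only at h; omega

theorem trilinear_sq_le_left (k : ℤ) :
    trilinear F₁ F₂ F₃ k ^ 2 ≤ (∑' i, F₁ i) ^ 2 * ((∑' j, F₂ j ^ 2) * ∑' x, F₃ x ^ 2) := by
  have h : trilinear F₁ F₂ F₃ k = ∑' i, F₁ i * ∑' j, F₂ j * F₃ (k - i + j) := by
    rw [trilinear, ENNReal.tsum_prod']
    simp_rw [mul_assoc, ENNReal.tsum_mul_left]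
  rw [h]
  exact ENNReal.sq_tsum_mul_tsum_mul_comp_le _ _ _ (fun i j => k - i + j) fun _ _ _ h => by
    simp only at h; omega

theorem trilinear_sq_le_middle (k : ℤ) :
    trilinear F₁ F₂ F₃ k ^ 2 ≤ (∑' i, F₂ i) ^ 2 * ((∑' j, F₃ j ^ 2) * ∑' x, F₁ x ^ 2) := by
  refine (pow_le_pow_left' (trilinear_le_rotate F₁ F₂ F₃ k) 2).trans ?_
  rw [ENNReal.tsum_prod']
  simp_rw [mul_assoc, ENNReal.tsum_mul_left]
  exact ENNReal.sq_tsum_mul_tsum_mul_comp_le _ _ _ (fun i j => k + i - j) fun _ _ _ h => by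
    simp only at h; omega

theorem trilinear_sq_le_right (k : ℤ) :
    trilinear F₁ F₂ F₃ k ^ 2 ≤ (∑' i, F₃ i) ^ 2 * ((∑' j, F₁ j ^ 2) * ∑' x, F₂ x ^ 2) := by
  refine (pow_le_pow_left' (trilinear_le_rotate' F₁ F₂ F₃ k) 2).trans ?_
  rw [ENNReal.tsum_prod']
  simp_rw [mul_assoc, ENNReal.tsum_mul_left]
  exact ENNReal.sq_tsum_mul_tsum_mul_comp_le _ _ _ (fun i j => i + j - k) fun _ _ _ h => by
    simp only at h; omega

end Trilinear

theorem tsum_sq_trilinear_le {G₁ G₂ G₃ H₁ H₂ H₃ b : ℤ → ℝ≥0∞} {A N₁ N₂ N₃ : ℝ≥0∞}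
    (hb : ∑' k, b k ^ 2 ≤ A) (hG₁ : ∑' k, G₁ k ^ 2 ≤ N₁) (hG₂ : ∑' k, G₂ k ^ 2 ≤ N₂)
    (hG₃ : ∑' k, G₃ k ^ 2 ≤ N₃) (hH₁ : (∑' k, H₁ k) ^ 2 ≤ A * N₁)
    (hH₂ : (∑' k, H₂ k) ^ 2 ≤ A * N₂) (hH₃ : (∑' k, H₃ k) ^ 2 ≤ A * N₃) :
    ∑' k, (trilinear G₁ H₂ H₃ k + trilinear H₁ G₂ H₃ k + trilinear H₁ H₂ G₃ k +
        b k * (trilinear G₁ G₂ H₃ k + trilinear G₁ H₂ G₃ k + trilinear H₁ G₂ G₃ k)) ^ 2 ≤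
      36 * (A ^ 2 * (N₁ * N₂ * N₃)) := by
  have hdecay {X : ℤ → ℝ≥0∞} {M : ℝ≥0∞} (hX : ∀ k, X k ^ 2 ≤ M) :
      ∑' k, (b k * X k) ^ 2 ≤ A * M := by
    calc _ ≤ ∑' k, b k ^ 2 * M := ENNReal.tsum_le_tsum fun k => by rw [mul_pow]; gcongr; exact hX k
      _ ≤ A * M := by rw [ENNReal.tsum_mul_right]; gcongr
  set U := ![trilinear G₁ H₂ H₃, trilinear H₁ G₂ H₃, trilinear H₁ H₂ G₃,
    fun k => b k * trilinear G₁ G₂ H₃ k, fun k => b k * trilinear G₁ H₂ G₃ k,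
    fun k => b k * trilinear H₁ G₂ G₃ k]
  have hU : ∀ m ∈ Finset.univ, ∑' k, U m k ^ 2 ≤ A ^ 2 * (N₁ * N₂ * N₃) := by
    intro m _
    fin_cases m
    · calc _ ≤ _ := tsum_trilinear_sq_le_left _ _ _
        _ ≤ A * N₂ * (A * N₃) * N₁ := by rw [mul_pow]; gcongr
        _ = _ := by ring
    · calc _ ≤ _ := tsum_trilinear_sq_le_middle _ _ _
        _ ≤ A * N₃ * (A * N₁) * N₂ := by rw [mul_pow]; gcongr
        _ = _ := by ring
    · calc _ ≤ _ := tsum_trilinear_sq_le_right _ _ _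
        _ ≤ A * N₁ * (A * N₂) * N₃ := by rw [mul_pow]; gcongr
        _ = _ := by ring
    · calc _ ≤ _ := hdecay fun k => trilinear_sq_le_right _ _ _ k
        _ ≤ A * (A * N₃ * (N₁ * N₂)) := by gcongr
        _ = _ := by ring
    · calc _ ≤ _ := hdecay fun k => trilinear_sq_le_middle _ _ _ k
        _ ≤ A * (A * N₂ * (N₃ * N₁)) := by gcongr
        _ = _ := by ring
    · calc _ ≤ _ := hdecay fun k => trilinear_sq_le_left _ _ _ k
        _ ≤ A * (A * N₁ * (N₂ * N₃)) := by gcongr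
        _ = _ := by ring
  calc _ = ∑' k, (∑ m, U m k) ^ 2 := by simp [U, Fin.sum_univ_six, mul_add, add_assoc]
    _ ≤ _ := ENNReal.tsum_sq_sum_le _ _ hU
    _ = _ := by norm_num

theorem one_le_jb (k : ℤ) : 1 ≤ jb k :=
  Real.one_le_sqrt.mpr (by nlinarith)

theorem jb_pos (k : ℤ) : 0 < jb k := one_pos.trans_le (one_le_jb k)

theorem jb_sq (k : ℤ) : jb k ^ 2 = 1 + (k : ℝ) ^ 2 := Real.sq_sqrt (by positivity)

theorem abs_le_jb (k : ℤ) : |(k : ℝ)| ≤ jb k := Real.abs_le_sqrt (by linarith)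

theorem jb_neg (k : ℤ) : jb (-k) = jb k := by simp [jb]

theorem jb_abs (k : ℤ) : jb |k| = jb k := by
  rcases abs_choice k with h | h <;> simp [h, jb_neg]

theorem jb_add_le (x y : ℤ) : jb (x + y) ≤ jb x + jb y := by
  have hxy : (x : ℝ) * y ≤ jb x * jb y := by
    calc (x : ℝ) * y ≤ |(x : ℝ)| * |(y : ℝ)| := by rw [← abs_mul]; exact le_abs_self _
      _ ≤ jb x * jb y := mul_le_mul (abs_le_jb x) (abs_le_jb y) (abs_nonneg _) (jb_pos x).le
  rw [jb, Real.sqrt_le_iff]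
  refine ⟨add_nonneg (jb_pos x).le (jb_pos y).le, ?_⟩
  push_cast
  nlinarith [jb_sq x, jb_sq y]

theorem jb_sub_add_le (x y z : ℤ) : jb (x - y + z) ≤ jb x + jb y + jb z := by
  calc jb (x - y + z) ≤ jb x + jb (-y) + jb z := by
        rw [sub_eq_add_neg]
        exact (jb_add_le _ _).trans (by gcongr; exact jb_add_le _ _)
    _ = jb x + jb y + jb z := by rw [jb_neg]

theorem jb_max_sq_le {k k₁ k₂ k₃ : ℤ} (h : k₁ - k₂ + k₃ = k) :
    jb (max (max |k₁| |k₂|) |k₃|) ^ 2 ≤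
      jb k * (jb k₁ + jb k₂ + jb k₃) + (jb k₁ * jb k₂ + jb k₁ * jb k₃ + jb k₂ * jb k₃) := by
  have h₁ : jb k₁ ≤ jb k + jb k₃ + jb k₂ := by
    simpa [show k - k₃ + k₂ = k₁ by omega] using jb_sub_add_le k k₃ k₂
  have h₂ : jb k₂ ≤ jb k₁ + jb k + jb k₃ := by
    simpa [show k₁ - k + k₃ = k₂ by omega] using jb_sub_add_le k₁ k k₃
  have h₃ : jb k₃ ≤ jb k + jb k₁ + jb k₂ := by
    simpa [show k - k₁ + k₂ = k₃ by omega] using jb_sub_add_le k k₁ k₂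
  have := jb_pos k; have := jb_pos k₁; have := jb_pos k₂; have := jb_pos k₃
  rcases max_choice (max |k₁| |k₂|) |k₃| with hm | hm <;> rw [hm]
  · rcases max_choice |k₁| |k₂| with hm' | hm' <;> rw [hm', jb_abs]
    · nlinarith [mul_le_mul_of_nonneg_left h₁ (jb_pos k₁).le]
    · nlinarith [mul_le_mul_of_nonneg_left h₂ (jb_pos k₂).le]
  · rw [jb_abs]
    nlinarith [mul_le_mul_of_nonneg_left h₃ (jb_pos k₃).le]

theorem rpow_sub_two_mul_sq_le {s a a₁ a₂ a₃ m : ℝ} (hs : 1 ≤ s) (ha : 1 ≤ a) (h₁ : 1 ≤ a₁)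
    (h₂ : 1 ≤ a₂) (h₃ : 1 ≤ a₃) (hsum : a ≤ a₁ + a₂ + a₃)
    (hm : m ^ 2 ≤ a * (a₁ + a₂ + a₃) + (a₁ * a₂ + a₁ * a₃ + a₂ * a₃)) :
    a ^ (s - 2) * m ^ 2 ≤ 3 ^ (s - 1) * (a₁ ^ (s - 1) * a₂ ^ (s - 1) * a₃ ^ (s - 1)) *
      (a₁ + a₂ + a₃ + a⁻¹ * (a₁ * a₂ + a₁ * a₃ + a₂ * a₃)) := by
  have hpow : a ^ (s - 1) ≤ 3 ^ (s - 1) * (a₁ ^ (s - 1) * a₂ ^ (s - 1) * a₃ ^ (s - 1)) :=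
    calc a ^ (s - 1) ≤ (3 * (a₁ * a₂ * a₃)) ^ (s - 1) := by
          gcongr
          have h₁₂ : 1 ≤ a₁ * a₂ := one_le_mul_of_one_le_of_one_le h₁ h₂
          nlinarith [one_le_mul_of_one_le_of_one_le h₁₂ h₃, one_le_mul_of_one_le_of_one_le h₂ h₃,
            one_le_mul_of_one_le_of_one_le h₁ h₃]
      _ = _ := by rw [Real.mul_rpow, Real.mul_rpow, Real.mul_rpow] <;> positivity
  have hsplit : a ^ (s - 2) = a ^ (s - 1) * a⁻¹ := by
    rw [← Real.rpow_neg_one, ← Real.rpow_add (by positivity)]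
    ring_nf
  calc a ^ (s - 2) * m ^ 2
      ≤ a ^ (s - 2) * (a * (a₁ + a₂ + a₃) + (a₁ * a₂ + a₁ * a₃ + a₂ * a₃)) := by gcongr
    _ = a ^ (s - 1) * (a₁ + a₂ + a₃ + a⁻¹ * (a₁ * a₂ + a₁ * a₃ + a₂ * a₃)) := by
        rw [hsplit]
        field_simp
    _ ≤ _ := by gcongr

noncomputable def jbPow (t : ℝ) (k : ℤ) : ℝ≥0∞ := ENNReal.ofReal (jb k ^ t)

theorem jbPow_add (t u : ℝ) (k : ℤ) : jbPow (t + u) k = jbPow t k * jbPow u k := by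
  rw [jbPow, Real.rpow_add (jb_pos k), ENNReal.ofReal_mul (Real.rpow_nonneg (jb_pos k).le _)]
  rfl

theorem summable_jb_rpow_neg_two : Summable fun k : ℤ => jb k ^ (-2 : ℝ) := by
  refine Summable.of_norm_bounded_eventually (Real.summable_one_div_int_pow.mpr one_lt_two) ?_
  filter_upwards [Filter.eventually_cofinite_ne 0] with k hk
  have hk' : (0 : ℝ) < (k : ℝ) ^ 2 := by positivity
  rw [Real.norm_of_nonneg (Real.rpow_nonneg (jb_pos k).le _), Real.rpow_neg (jb_pos k).le,
    Real.rpow_two, jb_sq, one_div]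
  gcongr
  linarith

theorem tsum_jbPow_neg_one_sq_ne_top : ∑' k, jbPow (-1) k ^ 2 ≠ ⊤ := by
  have h (k : ℤ) : jbPow (-1) k ^ 2 = ENNReal.ofReal (jb k ^ (-2 : ℝ)) := by
    rw [sq, ← jbPow_add]
    norm_num [jbPow]
  simp_rw [h, ← ENNReal.ofReal_tsum_of_nonneg (fun k => Real.rpow_nonneg (jb_pos k).le _)
    summable_jb_rpow_neg_two]
  exact ENNReal.ofReal_ne_top

noncomputable def weighted (t : ℝ) (f : ℤ → ℝ≥0) (k : ℤ) : ℝ≥0∞ := jbPow t k * f k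

theorem sobNorm_eq (s : ℝ) (f : ℤ → ℝ≥0) :
    sobNorm s f = (∑' k, weighted s f k ^ 2) ^ (1 / 2 : ℝ) := by
  simp_rw [sobNorm, weighted, mul_pow, sq (jbPow s _), ← jbPow_add, ← two_mul]
  rfl

theorem weighted_sub_one (s : ℝ) (f : ℤ → ℝ≥0) (k : ℤ) :
    weighted (s - 1) f k = jbPow (-1) k * weighted s f k := by
  rw [weighted, weighted, ← mul_assoc, ← jbPow_add]
  ring_nf

theorem weighted_eq_ofReal_mul (s : ℝ) (f : ℤ → ℝ≥0) (k : ℤ) :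
    weighted s f k = ENNReal.ofReal (jb k) * weighted (s - 1) f k := by
  rw [weighted, weighted, ← mul_assoc, show ENNReal.ofReal (jb k) = jbPow 1 k by simp [jbPow],
    ← jbPow_add]
  ring_nf

theorem sq_tsum_weighted_sub_one_le (s : ℝ) (f : ℤ → ℝ≥0) :
    (∑' k, weighted (s - 1) f k) ^ 2 ≤ (∑' k, jbPow (-1) k ^ 2) * ∑' k, weighted s f k ^ 2 := by
  simpa only [weighted_sub_one] using ENNReal.tsum_mul_sq_le _ _

theorem jbPow_mul_summand_le {s : ℝ} (hs : 1 ≤ s) (f₁ f₂ f₃ : ℤ → ℝ≥0) {k k₁ k₂ k₃ : ℤ}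
    (h : k₁ - k₂ + k₃ = k) :
    jbPow (s - 2) k * (jbPow 2 (max (max |k₁| |k₂|) |k₃|) * f₁ k₁ * f₂ k₂ * f₃ k₃) ≤
      ENNReal.ofReal (3 ^ (s - 1)) *
        (weighted s f₁ k₁ * weighted (s - 1) f₂ k₂ * weighted (s - 1) f₃ k₃ +
          weighted (s - 1) f₁ k₁ * weighted s f₂ k₂ * weighted (s - 1) f₃ k₃ +
          weighted (s - 1) f₁ k₁ * weighted (s - 1) f₂ k₂ * weighted s f₃ k₃ +
          jbPow (-1) k *
            (weighted s f₁ k₁ * weighted s f₂ k₂ * weighted (s - 1) f₃ k₃ +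
              weighted s f₁ k₁ * weighted (s - 1) f₂ k₂ * weighted s f₃ k₃ +
              weighted (s - 1) f₁ k₁ * weighted s f₂ k₂ * weighted s f₃ k₃)) := by
  have key := rpow_sub_two_mul_sq_le hs (one_le_jb k) (one_le_jb k₁) (one_le_jb k₂)
    (one_le_jb k₃) (h ▸ jb_sub_add_le k₁ k₂ k₃) (jb_max_sq_le h)
  rw [← Real.rpow_two] at key
  have := jb_pos k; have := jb_pos k₁; have := jb_pos k₂; have := jb_pos k₃
  simp only [weighted_eq_ofReal_mul s]
  simp only [weighted, jbPow, Real.rpow_neg_one]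
  calc _ = ENNReal.ofReal (jb k ^ (s - 2) * jb (max (max |k₁| |k₂|) |k₃|) ^ (2 : ℝ)) *
        (f₁ k₁ * f₂ k₂ * f₃ k₃) := by
        rw [ENNReal.ofReal_mul (by positivity)]
        ring
    _ ≤ _ := mul_le_mul_left (ENNReal.ofReal_le_ofReal key) _
    _ = _ := by
        simp (disch := positivity) only [ENNReal.ofReal_mul, ENNReal.ofReal_add]
        ring

theorem jbPow_mul_tsum_le {s : ℝ} (hs : 1 ≤ s) (f₁ f₂ f₃ : ℤ → ℝ≥0) (k : ℤ) :
    jbPow (s - 2) k * ∑' p : ℤ × ℤ, jbPow 2 (max (max |p.1| |p.2|) |k - p.1 + p.2|) *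
        f₁ p.1 * f₂ p.2 * f₃ (k - p.1 + p.2) ≤
      ENNReal.ofReal (3 ^ (s - 1)) *
        (trilinear (weighted s f₁) (weighted (s - 1) f₂) (weighted (s - 1) f₃) k +
          trilinear (weighted (s - 1) f₁) (weighted s f₂) (weighted (s - 1) f₃) k +
          trilinear (weighted (s - 1) f₁) (weighted (s - 1) f₂) (weighted s f₃) k +
          jbPow (-1) k *
            (trilinear (weighted s f₁) (weighted s f₂) (weighted (s - 1) f₃) k +
              trilinear (weighted s f₁) (weighted (s - 1) f₂) (weighted s f₃) k +
              trilinear (weighted (s - 1) f₁) (weighted s f₂) (weighted s f₃) k)) := by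
  rw [← ENNReal.tsum_mul_left]
  refine (ENNReal.tsum_le_tsum fun p => jbPow_mul_summand_le hs f₁ f₂ f₃ (by ring)).trans_eq ?_
  simp only [trilinear, ENNReal.tsum_mul_left, ENNReal.tsum_add]

theorem tsum_jbPow_mul_sq_le {s : ℝ} (hs : 1 ≤ s) (f₁ f₂ f₃ : ℤ → ℝ≥0) :
    ∑' k, jbPow (2 * (s - 2)) k * (∑' p : ℤ × ℤ, jbPow 2 (max (max |p.1| |p.2|) |k - p.1 + p.2|) *
        f₁ p.1 * f₂ p.2 * f₃ (k - p.1 + p.2)) ^ 2 ≤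
      (6 * ENNReal.ofReal (3 ^ (s - 1)) * ∑' k, jbPow (-1) k ^ 2) ^ 2 *
        ((∑' k, weighted s f₁ k ^ 2) * (∑' k, weighted s f₂ k ^ 2) *
          ∑' k, weighted s f₃ k ^ 2) := by
  have hsq (k : ℤ) : jbPow (2 * (s - 2)) k = jbPow (s - 2) k ^ 2 := by
    rw [sq, ← jbPow_add]
    ring_nf
  simp_rw [hsq, ← mul_pow]
  refine (ENNReal.tsum_le_tsum fun k =>
    pow_le_pow_left' (jbPow_mul_tsum_le hs f₁ f₂ f₃ k) 2).trans ?_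
  simp only [mul_pow, ENNReal.tsum_mul_left]
  calc _ ≤ ENNReal.ofReal (3 ^ (s - 1)) ^ 2 * (36 * ((∑' k, jbPow (-1) k ^ 2) ^ 2 *
        ((∑' k, weighted s f₁ k ^ 2) * (∑' k, weighted s f₂ k ^ 2) *
          ∑' k, weighted s f₃ k ^ 2))) := by
        gcongr
        exact tsum_sq_trilinear_le le_rfl le_rfl le_rfl le_rfl (sq_tsum_weighted_sub_one_le s f₁)
          (sq_tsum_weighted_sub_one_le s f₂) (sq_tsum_weighted_sub_one_le s f₃)
    _ = _ := by ring

theorem stmt_14 (s : ℝ) (hs : 1 ≤ s) :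
    ∃ C : ℝ, 0 < C ∧ ∀ f1 f2 f3 : ℤ → ℝ≥0,
      sobNorm s f1 ≠ ⊤ → sobNorm s f2 ≠ ⊤ → sobNorm s f3 ≠ ⊤ →
      (∑' k : ℤ, ENNReal.ofReal (jb k ^ (2 * (s - 2))) *
          (∑' p : ℤ × ℤ,
              ENNReal.ofReal (jb (max (max |p.1| |p.2|) |k - p.1 + p.2|) ^ (2 : ℝ)) *
                (f1 p.1 : ℝ≥0∞) * (f2 p.2 : ℝ≥0∞) * (f3 (k - p.1 + p.2) : ℝ≥0∞)) ^ 2) ^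
            ((1 : ℝ) / 2)
        ≤ ENNReal.ofReal C * (sobNorm s f1 * sobNorm s f2 * sobNorm s f3) := by
  set A := ∑' k, jbPow (-1) k ^ 2
  have hA : 0 < A.toReal := ENNReal.toReal_pos
    (ENNReal.summable.tsum_ne_zero_iff.mpr ⟨0, by simp [jbPow, jb]⟩) tsum_jbPow_neg_one_sq_ne_top
  refine ⟨6 * 3 ^ (s - 1) * A.toReal, by positivity, fun f₁ f₂ f₃ _ _ _ => ?_⟩
  have hC : ENNReal.ofReal (6 * 3 ^ (s - 1) * A.toReal) = 6 * ENNReal.ofReal (3 ^ (s - 1)) * A := by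
    rw [ENNReal.ofReal_mul (by positivity), ENNReal.ofReal_mul (by positivity),
      ENNReal.ofReal_toReal tsum_jbPow_neg_one_sq_ne_top, ENNReal.ofReal_ofNat]
  have hroot (x : ℝ≥0∞) : (x ^ 2) ^ (1 / 2 : ℝ) = x := by
    simpa using ENNReal.pow_rpow_inv_natCast two_ne_zero x
  rw [hC, sobNorm_eq, sobNorm_eq, sobNorm_eq, ← hroot (6 * _ * A), ← ENNReal.mul_rpow_of_nonneg,
    ← ENNReal.mul_rpow_of_nonneg, ← ENNReal.mul_rpow_of_nonneg]
  · gcongr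
    exact tsum_jbPow_mul_sq_le hs f₁ f₂ f₃
  all_goals norm_num
end
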